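/- arXiv:1404.7033 — 4 statements merged into one kernel-verified Lean document; each statement's English description precedes it below -/
import Mathlib

section
/- For every real p > 1 there exists a smooth function φ : ℝ → ℝ with φ(x) ≥ 0 for all x such that φ ∈ L¹(ℝ), every derivative φ^{(k)} (k ∈ ℕ, including k = 0) belongs to L^p(ℝ), but the first derivative φ′ does not belong to L¹(ℝ). -/
open MeasureTheory Real Set Topology Filter

noncomputable section S1aux

namespace S1

/-- `l t = log (1+t²)`, slowly growing analytic weight -/
def l (t : ℝ) : ℝ := Real.log (1 + t^2)
/-- `s t = √(1+t²)`, written via `exp` to make analyticity easy -/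
def s (t : ℝ) : ℝ := Real.exp (l t / 2)
def q (t : ℝ) : ℝ := (1 + t^2)⁻¹
def R (t : ℝ) : ℝ := (1 + l t^2)⁻¹
def G (t : ℝ) : ℝ := t * l t^2
/-- the counterexample function -/
def φ (t : ℝ) : ℝ := s t * q t * R t * (1 - Real.cos (G t))

lemma one_add_sq_pos (t : ℝ) : (0:ℝ) < 1 + t^2 := by positivity
lemma l_nonneg (t : ℝ) : 0 ≤ l t := Real.log_nonneg (by nlinarith [sq_nonneg t])
lemma s_pos (t : ℝ) : 0 < s t := Real.exp_pos _
lemma s_sq (t : ℝ) : s t ^ 2 = 1 + t^2 := by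
  rw [s, pow_two, ← Real.exp_add]
  have h : l t / 2 + l t / 2 = l t := by ring
  rw [h, l, Real.exp_log (one_add_sq_pos t)]
lemma one_le_s (t : ℝ) : 1 ≤ s t := Real.one_le_exp (div_nonneg (l_nonneg t) (by norm_num))
lemma abs_le_s (t : ℝ) : |t| ≤ s t := by
  have h := s_sq t
  nlinarith [s_pos t, abs_nonneg t, sq_abs t]
lemma s_le (t : ℝ) : s t ≤ 1 + |t| := by
  have h := s_sq t
  nlinarith [s_pos t, abs_nonneg t, sq_abs t]
lemma q_pos (t : ℝ) : 0 < q t := by rw [q]; positivity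
lemma q_le_one (t : ℝ) : q t ≤ 1 := by
  rw [q]; rw [inv_le_one_iff₀]; right; nlinarith [sq_nonneg t]
lemma R_pos (t : ℝ) : 0 < R t := by
  rw [R]; positivity
lemma R_le_one (t : ℝ) : R t ≤ 1 := by
  rw [R, inv_le_one_iff₀]; right; nlinarith [sq_nonneg (l t)]
lemma s_inv (t : ℝ) : (s t)⁻¹ = s t * q t := by
  have h := s_sq t
  have := s_pos t
  rw [q]
  field_simp
  nlinarith
lemma l_eq_two_log_s (t : ℝ) : l t = 2 * Real.log (s t) := by
  rw [s, Real.log_exp]; ring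

lemma phi_nonneg (t : ℝ) : 0 ≤ φ t := by
  have := Real.cos_le_one (G t)
  have := s_pos t; have := q_pos t; have := R_pos t
  have h4 : (0:ℝ) ≤ 1 - Real.cos (G t) := by linarith
  have := s_pos t; have := q_pos t; have := R_pos t
  apply mul_nonneg _ h4
  apply mul_nonneg (mul_nonneg _ _) _ <;> linarith

/- derivatives -/
lemma hasDerivAt_l (t : ℝ) : HasDerivAt l (2 * t * q t) t := by
  have h : HasDerivAt (fun t : ℝ => 1 + t^2) (2*t) t := by
    simpa using ((hasDerivAt_pow 2 t).const_add 1)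
  unfold l
  simpa [q, div_eq_mul_inv, mul_comm, mul_assoc] using h.log (ne_of_gt (one_add_sq_pos t))

lemma hasDerivAt_s (t : ℝ) : HasDerivAt s (t * q t * s t) t := by
  have h := ((hasDerivAt_l t).div_const 2).exp
  refine h.congr_deriv ?_
  rw [s]; ring

lemma hasDerivAt_q (t : ℝ) : HasDerivAt q (-(2 * t * q t^2)) t := by
  have h : HasDerivAt (fun t : ℝ => 1 + t^2) (2*t) t := by
    simpa using ((hasDerivAt_pow 2 t).const_add 1)
  have := h.inv (ne_of_gt (one_add_sq_pos t))
  refine this.congr_deriv ?_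
  rw [q]; field_simp

lemma hasDerivAt_R (t : ℝ) : HasDerivAt R (-(4 * t * q t * l t * R t^2)) t := by
  have h : HasDerivAt (fun t : ℝ => 1 + l t^2) (2 * l t * (2 * t * q t)) t := by
    simpa using (((hasDerivAt_l t).pow 2).const_add 1)
  have h2 : (0:ℝ) < 1 + l t^2 := by nlinarith [sq_nonneg (l t)]
  have := h.inv (ne_of_gt h2)
  refine this.congr_deriv ?_
  rw [R]; field_simp; ring

lemma hasDerivAt_G (t : ℝ) : HasDerivAt G (l t^2 + 4 * t^2 * q t * l t) t := by
  have h := (hasDerivAt_id t).mul ((hasDerivAt_l t).pow 2)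
  refine h.congr_deriv ?_
  simp only [id_eq, pow_one, Pi.pow_apply]
  ring

/- analyticity -/
lemma analyticAt_rlog {x : ℝ} (hx : 0 < x) : AnalyticAt ℝ Real.log x := by
  have h1 : AnalyticAt ℝ (fun y : ℝ => (Complex.log (y:ℂ)).re) x := by
    have hin : AnalyticAt ℝ (fun y : ℝ => Complex.log (y:ℂ)) x := by
      have hlog : AnalyticAt ℝ Complex.log ((x:ℝ) : ℂ) :=
        (analyticAt_clog (Or.inl (by exact_mod_cast hx))).restrictScalars
      exact AnalyticAt.comp (g := Complex.log) (f := fun y : ℝ => (y:ℂ))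
        hlog (Complex.ofRealCLM.analyticAt x)
    exact AnalyticAt.comp (g := fun z : ℂ => z.re) (f := fun y : ℝ => Complex.log (y:ℂ))
      (Complex.reCLM.analyticAt _) hin
  apply h1.congr
  filter_upwards [eventually_gt_nhds hx] with y hy
  rw [← Complex.ofReal_log hy.le, Complex.ofReal_re]

lemma analyticAt_rcos (x : ℝ) : AnalyticAt ℝ Real.cos x := by
  have h1 : AnalyticAt ℝ (fun y : ℝ => (Complex.cos (y:ℂ)).re) x := by
    have hcos : AnalyticAt ℝ Complex.cos ((x:ℝ):ℂ) :=
      (Complex.differentiable_cos.analyticAt _).restrictScalars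
    have hin : AnalyticAt ℝ (fun y : ℝ => Complex.cos (y:ℂ)) x :=
      AnalyticAt.comp (g := Complex.cos) (f := fun y : ℝ => (y:ℂ))
        hcos (Complex.ofRealCLM.analyticAt x)
    exact AnalyticAt.comp (g := fun z : ℂ => z.re) (f := fun y : ℝ => Complex.cos (y:ℂ))
      (Complex.reCLM.analyticAt _) hin
  apply h1.congr
  filter_upwards with y
  rw [Complex.cos_ofReal_re]

lemma analyticAt_poly (x : ℝ) : AnalyticAt ℝ (fun t : ℝ => 1 + t^2) x := by
  apply AnalyticAt.add analyticAt_const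
  exact (analyticAt_id.pow 2)

lemma analyticAt_l (x : ℝ) : AnalyticAt ℝ l x := by
  unfold l
  exact AnalyticAt.comp (g := Real.log) (f := fun t : ℝ => 1 + t^2)
    (analyticAt_rlog (one_add_sq_pos x)) (analyticAt_poly x)

lemma analyticAt_s (x : ℝ) : AnalyticAt ℝ s x := by
  unfold s
  exact AnalyticAt.comp (g := Real.exp) (f := fun t => l t / 2)
    analyticAt_rexp ((analyticAt_l x).div analyticAt_const (by norm_num))

lemma analyticAt_q (x : ℝ) : AnalyticAt ℝ q x := by
  unfold q
  exact (analyticAt_poly x).inv (ne_of_gt (one_add_sq_pos x))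

lemma analyticAt_R (x : ℝ) : AnalyticAt ℝ R x := by
  unfold R
  apply AnalyticAt.inv
  · exact analyticAt_const.add ((analyticAt_l x).pow 2)
  · nlinarith [sq_nonneg (l x)]

lemma analyticAt_G (x : ℝ) : AnalyticAt ℝ G x := by
  unfold G
  exact analyticAt_id.mul ((analyticAt_l x).pow 2)

lemma analyticAt_phi (x : ℝ) : AnalyticAt ℝ φ x := by
  unfold φ
  apply AnalyticAt.mul
  · exact ((analyticAt_s x).mul (analyticAt_q x)).mul (analyticAt_R x)
  · apply AnalyticAt.sub analyticAt_const
    exact AnalyticAt.comp (g := Real.cos) (f := G) (analyticAt_rcos _) (analyticAt_G x)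

lemma phi_contDiff : ContDiff ℝ (⊤ : ℕ∞) φ :=
  AnalyticOnNhd.contDiff (fun x _ => analyticAt_phi x)

/-- Functions in the algebra generated by `t, s, l, q, R, cos∘G, sin∘G`,
graded by growth degree `d` (power of `s`). -/
inductive Tame : ℤ → (ℝ → ℝ) → Prop
  | id' : Tame 1 (fun t => t)
  | s' : Tame 1 s
  | l' : Tame 0 l
  | q' : Tame (-2) q
  | R' : Tame 0 R
  | cos' : Tame 0 (fun t => Real.cos (G t))
  | sin' : Tame 0 (fun t => Real.sin (G t))
  | const (c : ℝ) : Tame 0 (fun _ => c)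
  | add {d f g} : Tame d f → Tame d g → Tame d (fun t => f t + g t)
  | mul {d e f g} : Tame d f → Tame e g → Tame (d + e) (fun t => f t * g t)
  | weaken {d e f} : Tame d f → d ≤ e → Tame e f

lemma Tame.hasDeriv {d : ℤ} {f : ℝ → ℝ} (hf : Tame d f) :
    ∃ g : ℝ → ℝ, Tame d g ∧ ∀ t, HasDerivAt f (g t) t := by
  induction hf with
  | id' =>
      exact ⟨fun _ => 1, (Tame.const 1).weaken (by norm_num), fun t => hasDerivAt_id t⟩
  | s' =>
      refine ⟨fun t => t * q t * s t, ?_, hasDerivAt_s⟩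
      have : Tame 0 (fun t => t * q t * s t) := by
        have h := (Tame.id'.mul Tame.q').mul Tame.s'
        norm_num at h
        exact h
      exact this.weaken (by norm_num)
  | l' =>
      refine ⟨fun t => 2 * t * q t, ?_, hasDerivAt_l⟩
      have h := ((Tame.const 2).mul Tame.id').mul Tame.q'
      norm_num at h
      exact h.weaken (by norm_num)
  | q' =>
      refine ⟨fun t => -(2 * t * q t^2), ?_, hasDerivAt_q⟩
      have h := ((Tame.const (-2)).mul Tame.id').mul (Tame.q'.mul Tame.q')
      have he : (fun t => (-2 : ℝ) * t * (q t * q t)) = (fun t => -(2 * t * q t^2)) := by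
        funext t; ring
      rw [he] at h
      norm_num at h
      exact h.weaken (show (-3:ℤ) ≤ -2 by norm_num)
  | R' =>
      refine ⟨fun t => -(4 * t * q t * l t * R t^2), ?_, hasDerivAt_R⟩
      have h := ((((Tame.const (-4)).mul Tame.id').mul Tame.q').mul Tame.l').mul
        (Tame.R'.mul Tame.R')
      have he : (fun t => (-4:ℝ) * t * q t * l t * (R t * R t))
          = (fun t => -(4 * t * q t * l t * R t^2)) := by funext t; ring
      rw [he] at h
      norm_num at h
      exact h.weaken (show (-1:ℤ) ≤ 0 by norm_num)
  | cos' =>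
      refine ⟨fun t => -(Real.sin (G t) * (l t^2 + 4 * t^2 * q t * l t)), ?_, ?_⟩
      · have h := ((Tame.const (-1)).mul Tame.sin').mul
          ((Tame.l'.mul Tame.l').add ((((((Tame.const 4).mul Tame.id').mul Tame.id').mul
            Tame.q').mul Tame.l').weaken (by norm_num)))
        have he : (fun t => (-1:ℝ) * Real.sin (G t) * (l t * l t + 4 * t * t * q t * l t))
            = (fun t => -(Real.sin (G t) * (l t^2 + 4 * t^2 * q t * l t))) := by
          funext t; ring
        rw [he] at h
        norm_num at h
        exact h
      · intro t
        have := (hasDerivAt_G t).cos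
        convert this using 1
        ring
  | sin' =>
      refine ⟨fun t => Real.cos (G t) * (l t^2 + 4 * t^2 * q t * l t), ?_, ?_⟩
      · have h := Tame.cos'.mul
          ((Tame.l'.mul Tame.l').add ((((((Tame.const 4).mul Tame.id').mul Tame.id').mul
            Tame.q').mul Tame.l').weaken (by norm_num)))
        have he : (fun t => Real.cos (G t) * (l t * l t + 4 * t * t * q t * l t))
            = (fun t => Real.cos (G t) * (l t^2 + 4 * t^2 * q t * l t)) := by
          funext t; ring
        rw [he] at h
        norm_num at h
        exact h
      · intro t
        exact (hasDerivAt_G t).sin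
  | const c => exact ⟨fun _ => 0, (Tame.const 0), fun t => hasDerivAt_const t c⟩
  | add hf hg ihf ihg =>
      obtain ⟨f', hf', hdf⟩ := ihf
      obtain ⟨g', hg', hdg⟩ := ihg
      exact ⟨fun t => f' t + g' t, hf'.add hg', fun t => (hdf t).add (hdg t)⟩
  | @mul d e f g hf hg ihf ihg =>
      obtain ⟨f', hf', hdf⟩ := ihf
      obtain ⟨g', hg', hdg⟩ := ihg
      refine ⟨fun t => f' t * g t + f t * g' t, (hf'.mul hg).add (hf.mul hg'), fun t => ?_⟩
      exact (hdf t).mul (hdg t)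
  | weaken hf hde ih =>
      obtain ⟨g, hg, hdg⟩ := ih
      exact ⟨g, hg.weaken hde, hdg⟩

lemma Tame.bound {d : ℤ} {f : ℝ → ℝ} (hf : Tame d f) :
    ∃ (C : ℝ) (N : ℕ), 0 ≤ C ∧ ∀ t, |f t| ≤ C * s t ^ d * (1 + l t) ^ N := by
  induction hf with
  | id' =>
      refine ⟨1, 0, zero_le_one, fun t => ?_⟩
      simpa using (abs_le_s t)
  | s' =>
      refine ⟨1, 0, zero_le_one, fun t => ?_⟩
      simp [abs_of_pos (s_pos t)]
  | l' =>
      refine ⟨1, 1, zero_le_one, fun t => ?_⟩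
      rw [abs_of_nonneg (l_nonneg t)]
      simp only [zpow_zero]
      nlinarith [l_nonneg t]
  | q' =>
      refine ⟨1, 0, zero_le_one, fun t => ?_⟩
      have h1 : (s t)^(-2 : ℤ) = ((s t)^(2:ℕ))⁻¹ := by
        rw [zpow_neg]
        norm_cast
      rw [abs_of_pos (q_pos t), q, ← s_sq t, pow_zero, mul_one, one_mul, h1]
  | R' =>
      refine ⟨1, 0, zero_le_one, fun t => ?_⟩
      rw [abs_of_pos (R_pos t)]
      simpa using R_le_one t
  | cos' =>
      refine ⟨1, 0, zero_le_one, fun t => ?_⟩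
      simpa using Real.abs_cos_le_one (G t)
  | sin' =>
      refine ⟨1, 0, zero_le_one, fun t => ?_⟩
      simpa using Real.abs_sin_le_one (G t)
  | const c =>
      refine ⟨|c|, 0, abs_nonneg c, fun t => ?_⟩
      simp
  | @add d f g hf hg ihf ihg =>
      obtain ⟨C1, N1, hC1, h1⟩ := ihf
      obtain ⟨C2, N2, hC2, h2⟩ := ihg
      refine ⟨C1 + C2, max N1 N2, by linarith, fun t => ?_⟩
      have hl1 : (1:ℝ) ≤ 1 + l t := by linarith [l_nonneg t]
      have m1 : (1 + l t) ^ N1 ≤ (1 + l t) ^ (max N1 N2) :=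
        pow_le_pow_right₀ hl1 (le_max_left _ _)
      have m2 : (1 + l t) ^ N2 ≤ (1 + l t) ^ (max N1 N2) :=
        pow_le_pow_right₀ hl1 (le_max_right _ _)
      have hs : (0:ℝ) < s t ^ d := zpow_pos (s_pos t) d
      calc |f t + g t| ≤ |f t| + |g t| := abs_add_le _ _
        _ ≤ C1 * s t ^ d * (1 + l t) ^ N1 + C2 * s t ^ d * (1 + l t) ^ N2 := by
            linarith [h1 t, h2 t]
        _ ≤ (C1 + C2) * s t ^ d * (1 + l t) ^ (max N1 N2) := by
            have e1 : C1 * s t ^ d * (1 + l t) ^ N1 ≤ C1 * s t ^ d * (1 + l t) ^ (max N1 N2) := by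
              apply mul_le_mul_of_nonneg_left m1
              exact mul_nonneg hC1 hs.le
            have e2 : C2 * s t ^ d * (1 + l t) ^ N2 ≤ C2 * s t ^ d * (1 + l t) ^ (max N1 N2) := by
              apply mul_le_mul_of_nonneg_left m2
              exact mul_nonneg hC2 hs.le
            have : (C1 + C2) * s t ^ d * (1 + l t) ^ (max N1 N2)
                = C1 * s t ^ d * (1 + l t) ^ (max N1 N2)
                  + C2 * s t ^ d * (1 + l t) ^ (max N1 N2) := by ring
            linarith
  | @mul d e f g hf hg ihf ihg =>
      obtain ⟨C1, N1, hC1, h1⟩ := ihf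
      obtain ⟨C2, N2, hC2, h2⟩ := ihg
      refine ⟨C1 * C2, N1 + N2, by positivity, fun t => ?_⟩
      have key : s t ^ d * s t ^ e = s t ^ (d + e) := (zpow_add₀ (ne_of_gt (s_pos t)) d e).symm
      have hpow : (1 + l t) ^ N1 * (1 + l t) ^ N2 = (1 + l t) ^ (N1 + N2) := (pow_add _ _ _).symm
      calc |f t * g t| = |f t| * |g t| := abs_mul _ _
        _ ≤ (C1 * s t ^ d * (1 + l t) ^ N1) * (C2 * s t ^ e * (1 + l t) ^ N2) := by
            apply mul_le_mul (h1 t) (h2 t) (abs_nonneg _)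
            have h3 := zpow_pos (s_pos t) d
            have h4 := l_nonneg t
            positivity
        _ = C1 * C2 * (s t ^ d * s t ^ e) * ((1 + l t) ^ N1 * (1 + l t) ^ N2) := by ring
        _ = C1 * C2 * s t ^ (d + e) * (1 + l t) ^ (N1 + N2) := by rw [key, hpow]
  | @weaken d e f hf hde ih =>
      obtain ⟨C, N, hC, h⟩ := ih
      refine ⟨C, N, hC, fun t => ?_⟩
      have : s t ^ d ≤ s t ^ e := zpow_le_zpow_right₀ (one_le_s t) hde
      have h4 := l_nonneg t
      have hl1 : (0:ℝ) < (1 + l t) ^ N := by positivity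
      calc |f t| ≤ C * s t ^ d * (1 + l t) ^ N := h t
        _ ≤ C * s t ^ e * (1 + l t) ^ N :=
            mul_le_mul_of_nonneg_right (mul_le_mul_of_nonneg_left this hC) hl1.le

lemma tame_phi : Tame (-1) φ := by
  have h : Tame (-1) (fun t => s t * q t * R t * (1 - Real.cos (G t))) := by
    have h1 := ((Tame.s'.mul Tame.q').mul Tame.R').mul
      ((Tame.const 1).add (((Tame.const (-1)).mul Tame.cos').weaken
        (show ((0:ℤ) + 0 : ℤ) ≤ 0 by norm_num)))
    have he : (fun t => s t * q t * R t * (1 + -1 * Real.cos (G t)))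
        = (fun t => s t * q t * R t * (1 - Real.cos (G t))) := by funext t; ring
    rw [he] at h1
    norm_num at h1
    exact h1
  exact h

lemma tame_iteratedDeriv (k : ℕ) : Tame (-1) (iteratedDeriv k φ) ∧
    ∀ t, DifferentiableAt ℝ (iteratedDeriv k φ) t := by
  induction k with
  | zero =>
      refine ⟨by simpa [iteratedDeriv_zero] using tame_phi, fun t => ?_⟩
      rw [iteratedDeriv_zero]
      obtain ⟨g, _, hd⟩ := tame_phi.hasDeriv
      exact (hd t).differentiableAt
  | succ k ih =>
      obtain ⟨htame, _⟩ := ih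
      obtain ⟨g, hg, hd⟩ := htame.hasDeriv
      have hder : deriv (iteratedDeriv k φ) = g := funext fun t => (hd t).deriv
      constructor
      · rw [iteratedDeriv_succ, hder]; exact hg
      · intro t
        rw [iteratedDeriv_succ, hder]
        obtain ⟨g2, _, hd2⟩ := hg.hasDeriv
        exact (hd2 t).differentiableAt

/-! ### Integrability -/

lemma tame_cont {d : ℤ} {f : ℝ → ℝ} (hf : Tame d f) : Continuous f := by
  obtain ⟨g, _, hd⟩ := hf.hasDeriv
  exact continuous_iff_continuousAt.mpr fun t => (hd t).differentiableAt.continuousAt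

lemma l_even (t : ℝ) : l (-t) = l t := by simp [l]
lemma s_even (t : ℝ) : s (-t) = s t := by simp [s, l_even]
lemma q_even (t : ℝ) : q (-t) = q t := by simp [q]
lemma R_even (t : ℝ) : R (-t) = R t := by simp [R, l_even]
lemma phi_even (t : ℝ) : φ (-t) = φ t := by
  have hG : G (-t) = -G t := by simp [G, l_even]
  simp [φ, s_even, q_even, R_even, hG]

lemma even_integrableOn {f : ℝ → ℝ} (hf : ∀ t, f (-t) = f t)
    (h : IntegrableOn f (Ioi (1:ℝ))) : IntegrableOn f (Iio (-1:ℝ)) := by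
  have hiff := (Measure.measurePreserving_neg (volume : Measure ℝ)).integrableOn_comp_preimage
    (Homeomorph.neg ℝ).measurableEmbedding (f := f) (s := Ioi (1:ℝ))
  have hpre : (Neg.neg : ℝ → ℝ) ⁻¹' (Ioi 1) = Iio (-1) := by
    ext x; simp [lt_neg]
  rw [hpre] at hiff
  have hcomp : (f ∘ Neg.neg) = f := funext fun t => hf t
  rw [hcomp] at hiff
  exact hiff.mpr h

lemma integrable_of_three {f : ℝ → ℝ}
    (h1 : IntegrableOn f (Iio (-1:ℝ))) (h2 : IntegrableOn f (Icc (-1:ℝ) 1))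
    (h3 : IntegrableOn f (Ioi (1:ℝ))) : Integrable f := by
  have hu : (univ : Set ℝ) = Iio (-1:ℝ) ∪ (Icc (-1:ℝ) 1 ∪ Ioi 1) := by
    ext x
    simp only [mem_univ, mem_union, mem_Iio, mem_Icc, mem_Ioi, true_iff]
    rcases lt_or_ge x (-1) with h | h
    · exact Or.inl h
    · rcases le_or_gt x 1 with h' | h'
      · exact Or.inr (Or.inl ⟨h, h'⟩)
      · exact Or.inr (Or.inr h')
  rw [← integrableOn_univ, hu]
  exact h1.union (h2.union h3)

lemma s_cont : Continuous s := by
  apply Real.continuous_exp.comp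
  apply Continuous.div_const
  apply Continuous.log
  · exact continuous_const.add (continuous_pow 2)
  · exact fun x => ne_of_gt (one_add_sq_pos x)

lemma integrable_s_rpow {r : ℝ} (hr : 1 < r) : Integrable (fun t => s t ^ (-r)) := by
  have hcont : Continuous (fun t => s t ^ (-r)) :=
    s_cont.rpow_const (fun t => Or.inl (ne_of_gt (s_pos t)))
  have h3 : IntegrableOn (fun t => s t ^ (-r)) (Ioi (1:ℝ)) := by
    apply Integrable.mono' (integrableOn_Ioi_rpow_of_lt (a := -r) (by linarith) one_pos)
      hcont.aestronglyMeasurable.restrict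
    refine (ae_restrict_iff' measurableSet_Ioi).2 (Filter.Eventually.of_forall fun t ht => ?_)
    have ht1 : (1:ℝ) < t := ht
    have hst : t ≤ s t := le_trans (le_abs_self t) (abs_le_s t)
    rw [Real.norm_eq_abs, abs_of_nonneg (Real.rpow_nonneg (s_pos t).le _)]
    exact Real.rpow_le_rpow_of_nonpos (by linarith) hst (by linarith)
  exact integrable_of_three
    (even_integrableOn (fun t => by rw [s_even]) h3)
    (hcont.continuousOn.integrableOn_compact isCompact_Icc) h3

lemma poly_log_bound (N : ℕ) {ε : ℝ} (hε : 0 < ε) :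
    ∃ K : ℝ, 0 ≤ K ∧ ∀ t, (1 + l t) ^ N ≤ K * s t ^ ε := by
  set δ : ℝ := ε / (N + 1) with hδdef
  have hδ : 0 < δ := by positivity
  refine ⟨(1 + 4/δ) ^ N, by positivity, fun t => ?_⟩
  have hs1 := one_le_s t
  have hspos := s_pos t
  have hrp1 : (1:ℝ) ≤ s t ^ (δ/2) := by
    rw [show (1:ℝ) = 1 ^ (δ/2) by simp]
    exact Real.rpow_le_rpow zero_le_one hs1 (by positivity)
  have hlog : Real.log (s t) ≤ s t ^ (δ/2) / (δ/2) :=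
    Real.log_le_rpow_div hspos.le (by positivity)
  have h1 : 1 + l t ≤ (1 + 4/δ) * s t ^ (δ/2) := by
    rw [l_eq_two_log_s]
    have : 2 * Real.log (s t) ≤ (4/δ) * s t ^ (δ/2) := by
      calc 2 * Real.log (s t) ≤ 2 * (s t ^ (δ/2) / (δ/2)) := by linarith
        _ = (4/δ) * s t ^ (δ/2) := by field_simp; ring
    nlinarith
  have h2 : (1 + l t) ^ N ≤ ((1 + 4/δ) * s t ^ (δ/2)) ^ N := by
    apply pow_le_pow_left₀ (by linarith [l_nonneg t]) h1
  have h3 : ((1 + 4/δ) * s t ^ (δ/2)) ^ N = (1 + 4/δ)^N * (s t ^ (δ/2))^N := mul_pow _ _ _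
  have h4 : (s t ^ (δ/2))^N = s t ^ (δ/2 * N) := by
    rw [← Real.rpow_natCast (s t ^ (δ/2)) N, ← Real.rpow_mul hspos.le]
  have h5 : s t ^ (δ/2 * N) ≤ s t ^ ε := by
    apply Real.rpow_le_rpow_of_exponent_le hs1
    have hd : δ * (N+1) = ε := by rw [hδdef]; field_simp
    nlinarith [hδ.le, Nat.cast_nonneg (α := ℝ) N]
  calc (1 + l t) ^ N ≤ (1 + 4/δ)^N * (s t ^ (δ/2))^N := by rw [← h3]; exact h2
    _ = (1 + 4/δ)^N * s t ^ (δ/2 * N) := by rw [h4]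
    _ ≤ (1 + 4/δ)^N * s t ^ ε := by
        apply mul_le_mul_of_nonneg_left h5 (by positivity)

lemma memLp_tame {f : ℝ → ℝ} {p : ℝ} (hp : 1 < p) (hf : Tame (-1) f) :
    MemLp f (ENNReal.ofReal p) := by
  have hcont : Continuous f := tame_cont hf
  have hp0 : (0:ℝ) < p := by linarith
  have hq0 : (ENNReal.ofReal p) ≠ 0 := by
    simp only [ne_eq, ENNReal.ofReal_eq_zero, not_le]; exact hp0
  have hqt : (ENNReal.ofReal p) ≠ ⊤ := ENNReal.ofReal_ne_top
  have htr : (ENNReal.ofReal p).toReal = p := ENNReal.toReal_ofReal hp0.le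
  refine (memLp_norm_rpow_iff hcont.aestronglyMeasurable hq0 hqt).mp ?_
  rw [ENNReal.div_self hq0 hqt, memLp_one_iff_integrable, htr]
  -- Integrable (fun t => ‖f t‖ ^ p)
  obtain ⟨C, N, hC, hb⟩ := hf.bound
  have hε : (0:ℝ) < (p - 1)/(2*p) := div_pos (by linarith) (by linarith)
  obtain ⟨K, hK, hKb⟩ := poly_log_bound N hε
  set r : ℝ := (p + 1)/2 with hrdef
  have hr : 1 < r := by rw [hrdef]; linarith
  have hmaj : Integrable (fun t => (C^p * K^p) * s t ^ (-r)) :=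
    (integrable_s_rpow hr).const_mul _
  apply Integrable.mono' hmaj
  · exact (hcont.norm.rpow_const (fun t => Or.inr hp0.le)).aestronglyMeasurable
  · refine Filter.Eventually.of_forall fun t => ?_
    have hspos := s_pos t
    have hfb := hb t
    have hl0 := l_nonneg t
    rw [Real.norm_eq_abs, abs_of_nonneg (Real.rpow_nonneg (norm_nonneg _) _)]
    have h1 : ‖f t‖ ^ p ≤ (C * s t ^ (-1:ℤ) * (1 + l t)^N) ^ p := by
      apply Real.rpow_le_rpow (norm_nonneg _) _ hp0.le
      rw [Real.norm_eq_abs]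
      exact hfb
    have hpos1 : (0:ℝ) ≤ s t ^ (-1:ℤ) := (zpow_pos hspos _).le
    have hpos2 : (0:ℝ) ≤ (1 + l t)^N := by positivity
    have h2 : (C * s t ^ (-1:ℤ) * (1 + l t)^N) ^ p
        = C^p * (s t ^ (-1:ℤ))^p * ((1 + l t)^N)^p := by
      rw [Real.mul_rpow (mul_nonneg hC hpos1) hpos2, Real.mul_rpow hC hpos1]
    have h3 : (s t ^ (-1:ℤ))^p = s t ^ (-p) := by
      rw [zpow_neg, zpow_one, ← Real.rpow_neg_one (s t), ← Real.rpow_mul hspos.le]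
      norm_num
    have h4 : ((1 + l t)^N)^p ≤ (K * s t ^ ((p-1)/(2*p)))^p :=
      Real.rpow_le_rpow hpos2 (hKb t) hp0.le
    have h5 : (K * s t ^ ((p-1)/(2*p)))^p = K^p * s t ^ ((p-1)/(2*p) * p) := by
      rw [Real.mul_rpow hK (Real.rpow_nonneg hspos.le _), ← Real.rpow_mul hspos.le]
    have h6 : s t ^ (-p) * s t ^ ((p-1)/(2*p) * p) = s t ^ (-p + (p-1)/(2*p) * p) := by
      rw [← Real.rpow_add hspos]
    have h7 : -p + (p-1)/(2*p) * p = -r := by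
      rw [hrdef]; field_simp; ring
    calc ‖f t‖ ^ p ≤ (C * s t ^ (-1:ℤ) * (1 + l t)^N) ^ p := h1
      _ = C^p * (s t ^ (-1:ℤ))^p * ((1 + l t)^N)^p := h2
      _ = C^p * s t ^ (-p) * ((1 + l t)^N)^p := by rw [h3]
      _ ≤ C^p * s t ^ (-p) * (K^p * s t ^ ((p-1)/(2*p) * p)) := by
          apply mul_le_mul_of_nonneg_left _ (by positivity)
          rw [← h5]; exact h4
      _ = (C^p * K^p) * (s t ^ (-p) * s t ^ ((p-1)/(2*p) * p)) := by ring
      _ = (C^p * K^p) * s t ^ (-r) := by rw [h6, h7]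

/-- `φ` is integrable (uses the extra `R` decay). -/
lemma integrable_phi : Integrable φ := by
  have hφcont : Continuous φ := tame_cont tame_phi
  -- the derivative of `arctan ∘ l` dominates `φ` for `t ≥ 1`
  have hder : ∀ t : ℝ, HasDerivAt (fun u => Real.arctan (l u)) (2 * t * q t * R t) t := by
    intro t
    have h := (hasDerivAt_l t).arctan
    convert h using 1
    rw [R]
    field_simp [l]
  have htend : Tendsto (fun t => Real.arctan (l t)) atTop (𝓝 (Real.pi/2)) := by
    have hl : Tendsto l atTop atTop := by
      apply Real.tendsto_log_atTop.comp
      apply tendsto_atTop_add_const_left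
      exact tendsto_pow_atTop (two_ne_zero)
    exact (Real.tendsto_arctan_atTop.mono_right nhdsWithin_le_nhds).comp hl
  have hint : IntegrableOn (fun t => 2 * t * q t * R t) (Ioi (1:ℝ)) := by
    apply integrableOn_Ioi_deriv_of_nonneg' (fun x _ => hder x) _ htend
    intro x hx
    have : (0:ℝ) < x := lt_trans one_pos hx
    have := q_pos x; have := R_pos x
    positivity
  have h3 : IntegrableOn φ (Ioi (1:ℝ)) := by
    apply Integrable.mono' (hint.const_mul 2) hφcont.aestronglyMeasurable.restrict
    refine (ae_restrict_iff' measurableSet_Ioi).2 (Filter.Eventually.of_forall fun t ht => ?_)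
    have ht1 : (1:ℝ) < t := ht
    have hs2t : s t ≤ 2 * t := by
      have h := s_sq t
      nlinarith [s_pos t]
    have hcos := Real.neg_one_le_cos (G t)
    have hcos2 := Real.cos_le_one (G t)
    have hq := q_pos t; have hR := R_pos t; have hs := s_pos t
    rw [Real.norm_eq_abs, abs_of_nonneg (phi_nonneg t), φ]
    have h1 : s t * q t * R t * (1 - Real.cos (G t)) ≤ s t * q t * R t * 2 := by
      apply mul_le_mul_of_nonneg_left (by linarith) (by positivity)
    calc s t * q t * R t * (1 - Real.cos (G t)) ≤ s t * q t * R t * 2 := h1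
      _ ≤ (2*t) * q t * R t * 2 := by gcongr
      _ = 2 * (2 * t * q t * R t) := by ring
  exact integrable_of_three (even_integrableOn phi_even h3)
    (hφcont.continuousOn.integrableOn_compact isCompact_Icc) h3

/-! ### Divergence of `∫ |φ'|` -/

lemma l_cont : Continuous l := by
  apply Continuous.log
  · exact continuous_const.add (continuous_pow 2)
  · exact fun x => ne_of_gt (one_add_sq_pos x)

lemma G_cont : Continuous G := continuous_id.mul (l_cont.pow 2)

lemma one_lt_l {t : ℝ} (ht : 2 ≤ t) : 1 < l t := by
  rw [l, Real.lt_log_iff_exp_lt (by nlinarith)]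
  calc Real.exp 1 < 2.7182818286 := Real.exp_one_lt_d9
    _ ≤ 1 + t^2 := by nlinarith

lemma log_five_lt : Real.log 5 < 7/4 := by
  have h625 : (625:ℝ) < Real.exp 7 := by
    have h1 : ((2.7182818283:ℝ))^(7:ℕ) < (Real.exp 1)^(7:ℕ) :=
      pow_lt_pow_left₀ Real.exp_one_gt_d9 (by norm_num) (by norm_num)
    have he : (Real.exp 1)^(7:ℕ) = Real.exp 7 := by
      rw [← Real.exp_nat_mul]; norm_num
    have h2 : (625:ℝ) < ((2.7182818283:ℝ))^(7:ℕ) := by norm_num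
    linarith [he ▸ h1]
  have h4 : Real.log 625 < 7 := by
    have he : Real.exp (Real.log 625) = 625 := Real.exp_log (by norm_num)
    by_contra hcon
    push_neg at hcon
    have := Real.exp_le_exp.mpr hcon
    rw [he] at this
    linarith
  have h5 : Real.log 625 = 4 * Real.log 5 := by
    rw [show (625:ℝ) = 5^(4:ℕ) by norm_num, Real.log_pow]; norm_num
  linarith

lemma G2_lt_two_pi : G 2 < 2 * Real.pi := by
  have hl2 : l 2 = Real.log 5 := by norm_num [l]
  have hG2 : G 2 = 2 * (Real.log 5)^2 := by rw [G, hl2]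
  have h := log_five_lt
  have hπ : (3.141592:ℝ) < Real.pi := Real.pi_gt_d6
  have hl5 : (0:ℝ) ≤ Real.log 5 := Real.log_nonneg (by norm_num)
  nlinarith

lemma G_strictMono : StrictMonoOn G (Ici (2:ℝ)) := by
  apply strictMonoOn_of_deriv_pos (convex_Ici 2) G_cont.continuousOn
  intro x hx
  rw [interior_Ici] at hx
  rw [(hasDerivAt_G x).deriv]
  have h2x : (2:ℝ) ≤ x := le_of_lt hx
  have hl := one_lt_l h2x
  have hq := q_pos x
  have h1 : (0:ℝ) < l x := by linarith
  have h2 : (0:ℝ) < x^2 := by nlinarith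
  nlinarith [mul_pos (mul_pos h2 hq) h1, sq_nonneg (l x)]

lemma G_ge_self {t : ℝ} (ht : 2 ≤ t) : t ≤ G t := by
  have hl := one_lt_l ht
  have h0 : (0:ℝ) < t := by linarith
  have hl2 : (1:ℝ) ≤ l t^2 := by nlinarith
  rw [G]
  nlinarith [mul_le_mul_of_nonneg_left hl2 h0.le]

lemma exists_G_eq {y : ℝ} (hy : G 2 ≤ y) : ∃ t, 2 ≤ t ∧ G t = y := by
  have hX : (2:ℝ) ≤ max 2 y := le_max_left _ _
  have hmem : y ∈ Icc (G 2) (G (max 2 y)) := by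
    refine ⟨hy, ?_⟩
    calc y ≤ max 2 y := le_max_right _ _
      _ ≤ G (max 2 y) := G_ge_self hX
  obtain ⟨t, ht, hGt⟩ := intermediate_value_Icc hX G_cont.continuousOn hmem
  exact ⟨t, ht.1, hGt⟩

lemma W_lower {t : ℝ} (ht : 2 ≤ t) : (3 * G t)⁻¹ ≤ s t * q t * R t := by
  have h1 : s t * q t * R t = (s t * (1 + l t^2))⁻¹ := by
    rw [mul_inv, ← s_inv, R]
  rw [h1]
  have hl := one_lt_l ht
  have hs := s_pos t
  have hsle : s t ≤ 1 + t := by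
    have := s_le t
    rwa [abs_of_nonneg (by linarith : (0:ℝ) ≤ t)] at this
  have hpos : (0:ℝ) < s t * (1 + l t^2) := by nlinarith
  apply inv_anti₀ hpos
  rw [G]
  have hA : s t * (1 + l t^2) ≤ (1+t) * (1 + l t^2) :=
    mul_le_mul_of_nonneg_right hsle (by nlinarith)
  have hc1 : t * 1 ≤ t * l t^2 :=
    mul_le_mul_of_nonneg_left (by nlinarith) (by linarith)
  have hc2 : 2 * l t^2 ≤ t * l t^2 :=
    mul_le_mul_of_nonneg_right ht (by nlinarith)
  nlinarith

lemma not_integrable_deriv_phi : ¬ Integrable (deriv φ) := by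
  intro h
  have hdiffφ : ∀ t, DifferentiableAt ℝ φ t := by
    have h0 := (tame_iteratedDeriv 0).2
    simpa [iteratedDeriv_zero] using h0
  have hπ := Real.pi_pos
  -- peak and zero points
  have hb_ex : ∀ m : ℕ, ∃ t, 2 ≤ t ∧ G t = (2*(m:ℝ)+3) * Real.pi := by
    intro m
    apply exists_G_eq
    have h1 : 2 * Real.pi ≤ (2*(m:ℝ)+3) * Real.pi := by
      apply mul_le_mul_of_nonneg_right _ hπ.le
      have : (0:ℝ) ≤ (m:ℝ) := Nat.cast_nonneg m
      linarith
    linarith [G2_lt_two_pi]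
  choose b hb2 hbG using hb_ex
  have ha_ex : ∀ m : ℕ, ∃ t, 2 ≤ t ∧ G t = (2*(m:ℝ)+2) * Real.pi := by
    intro m
    apply exists_G_eq
    have h1 : 2 * Real.pi ≤ (2*(m:ℝ)+2) * Real.pi := by
      apply mul_le_mul_of_nonneg_right _ hπ.le
      have : (0:ℝ) ≤ (m:ℝ) := Nat.cast_nonneg m
      linarith
    linarith [G2_lt_two_pi]
  choose a ha2 haG using ha_ex
  -- ordering
  have hab : ∀ m, a m < b m := by
    intro m
    apply (G_strictMono.lt_iff_lt (ha2 m) (hb2 m)).mp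
    rw [haG, hbG]
    have : (0:ℝ) ≤ (m:ℝ) := Nat.cast_nonneg m
    nlinarith
  have hba : ∀ m n : ℕ, m < n → b m < a n := by
    intro m n hmn
    apply (G_strictMono.lt_iff_lt (hb2 m) (ha2 n)).mp
    rw [hbG, haG]
    have hc : (m:ℝ) + 1 ≤ (n:ℝ) := by exact_mod_cast hmn
    nlinarith
  -- values of φ at the chosen points
  have hφa : ∀ m, φ (a m) = 0 := by
    intro m
    have hcos : Real.cos (G (a m)) = 1 := by
      rw [haG]
      have he : (2*(m:ℝ)+2) * Real.pi = ((m+1 : ℕ) : ℝ) * (2 * Real.pi) := by push_cast; ring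
      rw [he, Real.cos_nat_mul_two_pi]
    unfold φ
    rw [hcos]; ring
  have hφb : ∀ m, φ (b m) = 2 * (s (b m) * q (b m) * R (b m)) := by
    intro m
    have hcos : Real.cos (G (b m)) = -1 := by
      rw [hbG]
      have he : (2*(m:ℝ)+3) * Real.pi = ((m+1 : ℕ) : ℝ) * (2 * Real.pi) + Real.pi := by
        push_cast; ring
      rw [he, Real.cos_nat_mul_two_pi_add_pi]
    unfold φ
    rw [hcos]; ring
  -- FTC: each peak contributes its height to ∫|φ'|
  have key : ∀ m : ℕ, 2 * (s (b m) * q (b m) * R (b m))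
      ≤ ∫ t in Ioc (a m) (b m), ‖deriv φ t‖ := by
    intro m
    have hle := (hab m).le
    have hFTC : ∫ t in (a m)..(b m), deriv φ t = φ (b m) - φ (a m) :=
      intervalIntegral.integral_deriv_eq_sub (fun x _ => hdiffφ x) h.intervalIntegrable
    have h1 : φ (b m) - φ (a m) ≤ ‖∫ t in (a m)..(b m), deriv φ t‖ := by
      rw [hFTC, Real.norm_eq_abs]
      exact le_abs_self _
    have h2 : ‖∫ t in (a m)..(b m), deriv φ t‖ ≤ ∫ t in (a m)..(b m), ‖deriv φ t‖ :=
      intervalIntegral.norm_integral_le_integral_norm hle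
    have h3 : ∫ t in (a m)..(b m), ‖deriv φ t‖ = ∫ t in Ioc (a m) (b m), ‖deriv φ t‖ :=
      intervalIntegral.integral_of_le hle
    rw [hφb m, hφa m, sub_zero] at h1
    linarith [h3 ▸ (h1.trans h2)]
  -- partial sums are bounded by `∫ ‖deriv φ‖`
  have hsum : ∀ M : ℕ, ∑ m ∈ Finset.range M, (∫ t in Ioc (a m) (b m), ‖deriv φ t‖)
      ≤ ∫ t, ‖deriv φ t‖ := by
    intro M
    have hmeas : ∀ m ∈ Finset.range M, MeasurableSet (Ioc (a m) (b m)) :=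
      fun _ _ => measurableSet_Ioc
    have hdisj : Set.Pairwise ↑(Finset.range M) (Function.onFun Disjoint fun m => Ioc (a m) (b m)) := by
      intro i _ j _ hij
      have hgen : ∀ i j : ℕ, i < j → Disjoint (Ioc (a i) (b i)) (Ioc (a j) (b j)) := by
        intro i j hij
        apply Set.disjoint_left.mpr
        intro x hxi hxj
        have h1 : x ≤ b i := hxi.2
        have h2 : a j < x := hxj.1
        have := hba i j hij
        linarith
      rcases lt_or_gt_of_ne hij with hlt | hgt
      · exact hgen i j hlt
      · exact (hgen j i hgt).symm
    have heq := integral_biUnion_finset (Finset.range M) hmeas hdisj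
      (fun m _ => (h.norm.integrableOn)) (f := fun t => ‖deriv φ t‖)
    rw [← heq]
    exact setIntegral_le_integral h.norm (Filter.Eventually.of_forall fun t => norm_nonneg _)
  -- summability of the peak heights, and contradiction with the harmonic series
  have hWpos : ∀ m, (0:ℝ) ≤ 2 * (s (b m) * q (b m) * R (b m)) := by
    intro m
    have := s_pos (b m); have := q_pos (b m); have := R_pos (b m)
    positivity
  have hsummable : Summable (fun m => 2 * (s (b m) * q (b m) * R (b m))) := by
    apply summable_of_sum_range_le hWpos
    intro M
    calc ∑ m ∈ Finset.range M, 2 * (s (b m) * q (b m) * R (b m))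
        ≤ ∑ m ∈ Finset.range M, (∫ t in Ioc (a m) (b m), ‖deriv φ t‖) :=
          Finset.sum_le_sum (fun m _ => key m)
      _ ≤ ∫ t, ‖deriv φ t‖ := hsum M
  have hcle : ∀ m : ℕ, ((m:ℝ)+2)⁻¹ ≤ (3 * Real.pi) * (2 * (s (b m) * q (b m) * R (b m))) := by
    intro m
    have hW := W_lower (hb2 m)
    rw [hbG] at hW
    have hm0 : (0:ℝ) ≤ (m:ℝ) := Nat.cast_nonneg m
    have hpos1 : (0:ℝ) < (2*(m:ℝ)+3) * Real.pi := by positivity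
    have h1 : (3 * ((2*(m:ℝ)+3) * Real.pi))⁻¹ ≤ s (b m) * q (b m) * R (b m) := hW
    have h2 : ((m:ℝ)+2)⁻¹ ≤ (3*Real.pi) * (2 * (3 * ((2*(m:ℝ)+3) * Real.pi))⁻¹) := by
      have hk : (0:ℝ) < (2*(m:ℝ)+3) := by linarith
      have heq : (3*Real.pi) * (2 * (3 * ((2*(m:ℝ)+3) * Real.pi))⁻¹) = 2/(2*(m:ℝ)+3) := by
        field_simp
      rw [heq, inv_eq_one_div, div_le_div_iff₀ (by positivity) (by positivity)]
      linarith
    calc ((m:ℝ)+2)⁻¹ ≤ (3*Real.pi) * (2 * (3 * ((2*(m:ℝ)+3) * Real.pi))⁻¹) := h2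
      _ ≤ (3 * Real.pi) * (2 * (s (b m) * q (b m) * R (b m))) := by
          apply mul_le_mul_of_nonneg_left _ (by positivity)
          apply mul_le_mul_of_nonneg_left h1 (by norm_num)
  have hsum2 : Summable (fun m : ℕ => ((m:ℝ)+2)⁻¹) := by
    apply Summable.of_nonneg_of_le (fun m => by positivity) hcle
    exact hsummable.mul_left _
  have hsum3 : Summable (fun m : ℕ => ((m:ℝ))⁻¹) := by
    have he : (fun m : ℕ => ((m:ℝ)+2)⁻¹) = (fun m : ℕ => (((m+2:ℕ)):ℝ)⁻¹) := by
      funext m; push_cast; ring_nf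
    rw [he] at hsum2
    exact (_root_.summable_nat_add_iff 2).mp hsum2
  exact Real.not_summable_natCast_inv hsum3

end S1
end S1aux

open MeasureTheory

/-- For every real `p > 1` there is a nonnegative smooth function
`φ : ℝ → ℝ` with `φ ∈ L¹(ℝ)`, all derivatives `φ^(k)` (including `k = 0`) in `L^p(ℝ)`,
but `φ' ∉ L¹(ℝ)`. -/
theorem statement_1 (p : ℝ) (hp : 1 < p) :
    ∃ φ : ℝ → ℝ, ContDiff ℝ (⊤ : ℕ∞) φ ∧ (∀ x, 0 ≤ φ x) ∧
      MeasureTheory.MemLp φ 1 ∧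
      (∀ k : ℕ, MeasureTheory.MemLp (iteratedDeriv k φ) (ENNReal.ofReal p)) ∧
      ¬ MeasureTheory.MemLp (deriv φ) 1 := by
  refine ⟨S1.φ, S1.phi_contDiff, S1.phi_nonneg, ?_, ?_, ?_⟩
  · exact memLp_one_iff_integrable.mpr S1.integrable_phi
  · intro k
    exact S1.memLp_tame hp (S1.tame_iteratedDeriv k).1
  · intro hmem
    exact S1.not_integrable_deriv_phi (memLp_one_iff_integrable.mp hmem)
end

section
/- Let M = (M_k) be a log-convex weight sequence, let A > 0, and let m, n ≥ 1 be integers. Then there exist constants B, C > 0 such that for every multi-index γ ∈ ℕⁿ ∖ {0}: Σ (α!/∏_δ k(δ)!) · A^{|α|} · M_{|α|} · ∏_δ M_{|δ|}^{|k(δ)|} ≤ B · C^{|γ|} · M_{|γ|}, where the sum ranges over all finitely supported functions k : ℕⁿ ∖ {0} → ℕᵐ satisfying Σ_δ |k(δ)|·δ = γ, where α := Σ_δ k(δ) ∈ ℕᵐ, α! = α₁!⋯α_m!, k(δ)! = k(δ)₁!⋯k(δ)_m!, and |·| denotes the sum of the entries of a multi-index. -/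
/-!
Log-convexity makes `M (q + 1) / M q` nondecreasing, whence `M a * M (b + 1) ≤ M 1 * M (a + b)`;
iterating, `M |α| * ∏ δ, M |δ| ^ |k δ| ≤ M 1 ^ |α| * M |γ|`, because
`|α| + ∑ δ, |k δ| * (|δ| - 1) = |γ|`.

For the coefficients, `α! ≤ |α|!`, and `|α|! / ∏ δ, k(δ)!` is the multinomial coefficient of `k`
read as a function of the pairs `(δ, i)`. Giving the pair `(δ, i)` the weight `r ^ |δ|` with
`r = 1 / (4 (n + 1) (m + 1))`, every admissible `k` has total weight `r ^ |γ|`, and the weighted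
sum of multinomial coefficients is at most `∑ N, (∑ weights) ^ N ≤ ∑ N, 2⁻¹ ^ N = 2`, the
weights of the pairs summing to at most `m ((1 - r)⁻ⁿ - 1) ≤ 1 / 2`.
-/

/-- The size `|α|` of a multi-index: the sum of its entries. -/
def msize {d : ℕ} (α : Fin d → ℕ) : ℕ := ∑ i, α i

/-- The factorial `α!` of a multi-index: the product of the factorials of its entries. -/
def mfact {d : ℕ} (α : Fin d → ℕ) : ℕ := ∏ i, Nat.factorial (α i)

open Finset

section LogConvex

variable {M : ℕ → ℝ}

theorem monotone_succ_div_of_logConvex (hMpos : ∀ k, 0 < M k)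
    (hlc : ∀ k : ℕ, 1 ≤ k → (M k) ^ 2 ≤ M (k - 1) * M (k + 1)) :
    Monotone fun q => M (q + 1) / M q := by
  refine monotone_nat_of_le_succ fun q => ?_
  have h := hlc (q + 1) (by omega)
  rw [Nat.add_sub_cancel] at h
  rw [div_le_div_iff₀ (hMpos q) (hMpos (q + 1))]
  nlinarith

theorem mul_succ_le_of_logConvex (hMpos : ∀ k, 0 < M k)
    (hlc : ∀ k : ℕ, 1 ≤ k → (M k) ^ 2 ≤ M (k - 1) * M (k + 1)) {a : ℕ} (ha : 1 ≤ a) (b : ℕ) :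
    M a * M (b + 1) ≤ M 1 * M (a + b) := by
  induction b with
  | zero => simp [mul_comm]
  | succ b ih =>
    have hratio : M (b + 2) / M (b + 1) ≤ M (a + b + 1) / M (a + b) :=
      monotone_succ_div_of_logConvex hMpos hlc (by omega)
    calc M a * M (b + 1 + 1) = M a * M (b + 1) * (M (b + 2) / M (b + 1)) := by
          field_simp [(hMpos (b + 1)).ne']
      _ ≤ M 1 * M (a + b) * (M (a + b + 1) / M (a + b)) := by
          gcongr
          · exact div_nonneg (hMpos _).le (hMpos _).le
          · exact mul_nonneg (hMpos 1).le (hMpos _).le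
      _ = M 1 * M (a + (b + 1)) := by
          field_simp [(hMpos (a + b)).ne']
          ring_nf

theorem mul_pow_le_of_logConvex (hMpos : ∀ k, 0 < M k)
    (hlc : ∀ k : ℕ, 1 ≤ k → (M k) ^ 2 ≤ M (k - 1) * M (k + 1)) {c d : ℕ} (hc : 1 ≤ c)
    (hd : 1 ≤ d) (j : ℕ) :
    M c * M d ^ j ≤ M 1 ^ j * M (c + j * (d - 1)) := by
  obtain ⟨e, rfl⟩ : ∃ e, d = e + 1 := ⟨d - 1, by omega⟩
  induction j with
  | zero => simp
  | succ j ih =>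
    calc M c * M (e + 1) ^ (j + 1) = M c * M (e + 1) ^ j * M (e + 1) := by ring
      _ ≤ M 1 ^ j * M (c + j * e) * M (e + 1) := by
          simpa using mul_le_mul_of_nonneg_right ih (hMpos (e + 1)).le
      _ ≤ M 1 ^ j * (M 1 * M (c + j * e + e)) := by
          rw [mul_assoc]
          exact mul_le_mul_of_nonneg_left (mul_succ_le_of_logConvex hMpos hlc (by omega) e)
            (pow_nonneg (hMpos 1).le j)
      _ = M 1 ^ (j + 1) * M (c + (j + 1) * (e + 1 - 1)) := by
          rw [Nat.add_sub_cancel, pow_succ]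
          ring_nf

theorem mul_prod_pow_le_of_logConvex (hMpos : ∀ k, 0 < M k)
    (hlc : ∀ k : ℕ, 1 ≤ k → (M k) ^ 2 ≤ M (k - 1) * M (k + 1)) {X : Type*} (T : Finset X)
    {d : X → ℕ} (hd : ∀ x ∈ T, 1 ≤ d x) (j : X → ℕ) {c : ℕ} (hc : 1 ≤ c) :
    M c * ∏ x ∈ T, M (d x) ^ j x ≤ M 1 ^ (∑ x ∈ T, j x) * M (c + ∑ x ∈ T, j x * (d x - 1)) := by
  classical
  induction T using Finset.induction generalizing c with
  | empty => simp
  | insert a T ha ih =>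
    rw [prod_insert ha, sum_insert ha, sum_insert ha]
    have hT : ∀ x ∈ T, 1 ≤ d x := fun x hx => hd x (mem_insert_of_mem hx)
    calc M c * (M (d a) ^ j a * ∏ x ∈ T, M (d x) ^ j x)
        = M c * (∏ x ∈ T, M (d x) ^ j x) * M (d a) ^ j a := by ring
      _ ≤ M 1 ^ (∑ x ∈ T, j x) * M (c + ∑ x ∈ T, j x * (d x - 1)) * M (d a) ^ j a :=
          mul_le_mul_of_nonneg_right (ih hT hc) (pow_nonneg (hMpos _).le _)
      _ ≤ M 1 ^ (∑ x ∈ T, j x) *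
            (M 1 ^ j a * M (c + ∑ x ∈ T, j x * (d x - 1) + j a * (d a - 1))) := by
          rw [mul_assoc]
          exact mul_le_mul_of_nonneg_left
            (mul_pow_le_of_logConvex hMpos hlc (by omega) (hd a (mem_insert_self a T)) _)
            (pow_nonneg (hMpos 1).le _)
      _ = M 1 ^ (j a + ∑ x ∈ T, j x) * M (c + (j a * (d a - 1) + ∑ x ∈ T, j x * (d x - 1))) := by
          rw [pow_add]
          ring_nf

theorem pow_mul_prod_pow_le_of_logConvex (hMpos : ∀ k, 0 < M k) (hM1 : 1 ≤ M 1)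
    (hlc : ∀ k : ℕ, 1 ≤ k → (M k) ^ 2 ≤ M (k - 1) * M (k + 1)) {A : ℝ} (hA : 0 < A)
    {X : Type*} (T : Finset X) {d : X → ℕ} (hd : ∀ x ∈ T, 1 ≤ d x) (j : X → ℕ)
    (hG : 1 ≤ ∑ x ∈ T, j x * d x) :
    A ^ (∑ x ∈ T, j x) * M (∑ x ∈ T, j x) * ∏ x ∈ T, M (d x) ^ j x
      ≤ (max 1 A * M 1) ^ (∑ x ∈ T, j x * d x) * M (∑ x ∈ T, j x * d x) := by
  set N := ∑ x ∈ T, j x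
  set G := ∑ x ∈ T, j x * d x
  have hNG : N ≤ G := sum_le_sum fun x hx => Nat.le_mul_of_pos_right _ (hd x hx)
  have hN : 1 ≤ N := by
    by_contra! h
    have hj : ∀ x ∈ T, j x = 0 := sum_eq_zero_iff.mp (Nat.lt_one_iff.mp h)
    have : G = 0 := sum_eq_zero fun x hx => by rw [hj x hx, zero_mul]
    omega
  have hindex : N + ∑ x ∈ T, j x * (d x - 1) = G := by
    rw [← sum_add_distrib]
    refine sum_congr rfl fun x hx => ?_
    rw [Nat.mul_sub_one, Nat.add_sub_cancel' (Nat.le_mul_of_pos_right _ (hd x hx))]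
  have hM := mul_prod_pow_le_of_logConvex hMpos hlc T hd j hN
  rw [hindex] at hM
  have hone : 1 ≤ max 1 A * M 1 := one_le_mul_of_one_le_of_one_le (le_max_left 1 A) hM1
  calc A ^ N * M N * ∏ x ∈ T, M (d x) ^ j x = A ^ N * (M N * ∏ x ∈ T, M (d x) ^ j x) := by
        ring
    _ ≤ A ^ N * (M 1 ^ N * M G) := by gcongr
    _ = (A * M 1) ^ N * M G := by ring
    _ ≤ (max 1 A * M 1) ^ G * M G := by
        refine mul_le_mul_of_nonneg_right ?_ (hMpos G).le
        calc (A * M 1) ^ N ≤ (max 1 A * M 1) ^ N := by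
              gcongr
              exact le_max_right 1 A
          _ ≤ (max 1 A * M 1) ^ G := pow_le_pow_right₀ hone hNG

end LogConvex

theorem inv_one_sub_pow_sub_one_le {r : ℝ} (hr : 0 ≤ r) {n : ℕ} (hnr : 2 * n * r ≤ 1) :
    ((1 - r) ^ n)⁻¹ - 1 ≤ 2 * n * r := by
  rcases Nat.eq_zero_or_pos n with rfl | hn
  · simp
  have hr2 : r ≤ 2 := by
    have : (1 : ℝ) ≤ n := by exact_mod_cast hn
    nlinarith
  have hbernoulli : 1 - n * r ≤ (1 - r) ^ n := by
    simpa [sub_eq_add_neg] using one_add_mul_le_pow (a := -r) (by linarith) n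
  have hpos : 0 < (1 - r) ^ n := by linarith
  rw [sub_le_iff_le_add, inv_le_iff_one_le_mul₀ hpos]
  have hnr0 : 0 ≤ n * r := by positivity
  nlinarith [mul_le_mul_of_nonneg_left hbernoulli (by positivity : (0 : ℝ) ≤ 2 * n * r + 1),
    mul_nonneg hnr0 (by linarith : (0 : ℝ) ≤ 1 - 2 * n * r)]

section MultiIndex

variable {d : ℕ}

theorem msize_sum {X : Type*} (T : Finset X) (f : X → Fin d → ℕ) :
    msize (∑ x ∈ T, f x) = ∑ x ∈ T, msize (f x) := by
  simp only [msize, Finset.sum_apply]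
  exact sum_comm

theorem msize_smul (c : ℕ) (α : Fin d → ℕ) : msize (c • α) = c * msize α := by
  simp [msize, mul_sum]

theorem one_le_msize {α : Fin d → ℕ} (hα : α ≠ 0) : 1 ≤ msize α :=
  Nat.one_le_iff_ne_zero.mpr fun h => hα (by simpa [msize, funext_iff] using h)

theorem mfact_le_factorial_msize (α : Fin d → ℕ) : mfact α ≤ (msize α).factorial :=
  Nat.le_of_dvd (Nat.factorial_pos _) (Nat.prod_factorial_dvd_factorial_sum _ _)

theorem sum_pow_msize_le {r : ℝ} (hr0 : 0 ≤ r) (hr1 : r < 1) {D : Finset (Fin d → ℕ)}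
    (hD : (0 : Fin d → ℕ) ∉ D) :
    ∑ δ ∈ D, r ^ msize δ ≤ ((1 - r) ^ d)⁻¹ - 1 := by
  classical
  set L := D.sup fun δ => univ.sup δ
  set box := Fintype.piFinset fun _ : Fin d => range (L + 1)
  have hsub : D ⊆ box.erase 0 := by
    intro δ hδ
    refine mem_erase.mpr ⟨fun h => hD (h ▸ hδ), Fintype.mem_piFinset.mpr fun i => ?_⟩
    have := (le_sup (mem_univ i)).trans (le_sup (f := fun δ => univ.sup δ) hδ)
    exact mem_range.mpr (Nat.lt_succ_of_le this)
  have hbox : ∑ δ ∈ box, r ^ msize δ = (∑ a ∈ range (L + 1), r ^ a) ^ d := by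
    simp only [msize, ← prod_pow_eq_pow_sum, box, ← prod_univ_sum, prod_const, card_univ,
      Fintype.card_fin]
  have hgeom : ∑ a ∈ range (L + 1), r ^ a ≤ (1 - r)⁻¹ :=
    (summable_geometric_of_lt_one hr0 hr1).sum_le_tsum _ (fun _ _ => pow_nonneg hr0 _)
      |>.trans_eq (tsum_geometric_of_lt_one hr0 hr1)
  calc ∑ δ ∈ D, r ^ msize δ ≤ ∑ δ ∈ box.erase 0, r ^ msize δ :=
        sum_le_sum_of_subset_of_nonneg hsub fun _ _ _ => pow_nonneg hr0 _
    _ = ∑ δ ∈ box, r ^ msize δ - 1 := by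
        rw [sum_erase_eq_sub (by simp [box])]
        simp [msize]
    _ ≤ ((1 - r) ^ d)⁻¹ - 1 := by
        rw [hbox, ← inv_pow]
        gcongr

end MultiIndex

theorem sum_multinomial_mul_prod_pow_le {X : Type*} [DecidableEq X] (E : Finset X) {t : X → ℝ}
    (ht : ∀ p ∈ E, 0 ≤ t p) {q : ℝ} (hq : ∑ p ∈ E, t p ≤ q) (hq1 : q < 1)
    (F : Finset (X → ℕ)) (hF : ∀ g ∈ F, ∀ p, g p ≠ 0 → p ∈ E) :
    ∑ g ∈ F, (Nat.multinomial E g : ℝ) * ∏ p ∈ E, t p ^ g p ≤ (1 - q)⁻¹ := by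
  have hsum0 : 0 ≤ ∑ p ∈ E, t p := sum_nonneg ht
  have hq0 : 0 ≤ q := hsum0.trans hq
  have hterm0 : ∀ g : X → ℕ, 0 ≤ (Nat.multinomial E g : ℝ) * ∏ p ∈ E, t p ^ g p :=
    fun g => mul_nonneg (Nat.cast_nonneg _) (prod_nonneg fun p hp => pow_nonneg (ht p hp) _)
  set I := F.image fun g => ∑ p ∈ E, g p
  calc ∑ g ∈ F, (Nat.multinomial E g : ℝ) * ∏ p ∈ E, t p ^ g p
      = ∑ N ∈ I, ∑ g ∈ F with ∑ p ∈ E, g p = N,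
          (Nat.multinomial E g : ℝ) * ∏ p ∈ E, t p ^ g p :=
        (sum_fiberwise_of_maps_to (fun g hg => mem_image_of_mem _ hg) _).symm
    _ ≤ ∑ N ∈ I, ∑ g ∈ E.piAntidiag N, (Nat.multinomial E g : ℝ) * ∏ p ∈ E, t p ^ g p := by
        refine sum_le_sum fun N _ => sum_le_sum_of_subset_of_nonneg ?_ fun g _ _ => hterm0 g
        intro g hg
        rw [mem_filter] at hg
        exact mem_piAntidiag.mpr ⟨hg.2, hF g hg.1⟩
    _ = ∑ N ∈ I, (∑ p ∈ E, t p) ^ N := by simp only [sum_pow_eq_sum_piAntidiag]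
    _ ≤ ∑ N ∈ I, q ^ N := sum_le_sum fun N _ => pow_le_pow_left₀ hsum0 hq N
    _ ≤ ∑' N, q ^ N :=
        (summable_geometric_of_lt_one hq0 hq1).sum_le_tsum _ fun N _ => pow_nonneg hq0 N
    _ = (1 - q)⁻¹ := tsum_geometric_of_lt_one hq0 hq1

section Flatten

variable {X : Type*} {m : ℕ} (k : X →₀ (Fin m → ℕ)) {D : Finset X}

@[to_additive]
theorem prod_product_univ_eq_prod_support {R : Type*} [CommMonoid R] (hD : k.support ⊆ D)
    (g : X → ℕ → R) (hg : ∀ x, g x 0 = 1) :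
    ∏ p ∈ D ×ˢ univ, g p.1 (k p.1 p.2) = ∏ x ∈ k.support, ∏ i, g x (k x i) := by
  rw [prod_product]
  refine (prod_subset hD fun x _ hx => ?_).symm
  simp [Finsupp.notMem_support_iff.mp hx, hg]

theorem mfact_sum_div_prod_mfact_le_multinomial (hD : k.support ⊆ D) :
    (mfact (∑ x ∈ k.support, k x) : ℝ) / ∏ x ∈ k.support, (mfact (k x) : ℝ)
      ≤ Nat.multinomial (D ×ˢ univ) fun p => k p.1 p.2 := by
  have hspec := Nat.multinomial_spec (D ×ˢ univ) fun p => k p.1 p.2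
  rw [sum_product_univ_eq_sum_support k hD (fun _ a => a) fun _ => rfl,
    prod_product_univ_eq_prod_support k hD (fun _ a => a.factorial) fun _ => rfl] at hspec
  have hpos : (0 : ℝ) < ∏ x ∈ k.support, (mfact (k x) : ℝ) :=
    prod_pos fun x _ => Nat.cast_pos.mpr (Nat.prod_factorial_pos _ _)
  rw [div_le_iff₀ hpos, mul_comm, ← Nat.cast_prod, ← Nat.cast_mul]
  change _ ≤ (((∏ x ∈ k.support, ∏ i, (k x i).factorial) * _ : ℕ) : ℝ)
  rw [hspec]
  exact_mod_cast (mfact_le_factorial_msize _).trans_eq (by rw [msize_sum]; rfl)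

theorem prod_product_univ_pow (hD : k.support ⊆ D) (w : X → ℝ) :
    ∏ p ∈ D ×ˢ univ, w p.1 ^ k p.1 p.2 = ∏ x ∈ k.support, w x ^ msize (k x) := by
  rw [prod_product_univ_eq_prod_support k hD (fun x a => w x ^ a) fun _ => pow_zero _]
  simp only [prod_pow_eq_pow_sum, msize]

end Flatten

section FaaDiBruno

variable {n m : ℕ} {γ : Fin n → ℕ}

theorem msize_eq_sum_mul_msize {k : (Fin n → ℕ) →₀ (Fin m → ℕ)}
    (hk : ∑ δ ∈ k.support, msize (k δ) • δ = γ) :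
    msize γ = ∑ δ ∈ k.support, msize (k δ) * msize δ := by
  rw [← hk, msize_sum]
  simp only [msize_smul]

theorem pow_mul_prod_pow_msize_le {M : ℕ → ℝ} (hMpos : ∀ k, 0 < M k) (hM1 : 1 ≤ M 1)
    (hlc : ∀ k : ℕ, 1 ≤ k → (M k) ^ 2 ≤ M (k - 1) * M (k + 1)) {A : ℝ} (hA : 0 < A)
    {k : (Fin n → ℕ) →₀ (Fin m → ℕ)} (hk0 : k 0 = 0) (hkγ : ∑ δ ∈ k.support, msize (k δ) • δ = γ)
    (hγ : γ ≠ 0) :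
    A ^ msize (∑ δ ∈ k.support, k δ) * M (msize (∑ δ ∈ k.support, k δ)) *
        ∏ δ ∈ k.support, M (msize δ) ^ msize (k δ)
      ≤ (max 1 A * M 1) ^ msize γ * M (msize γ) := by
  have hγ1 := one_le_msize hγ
  rw [msize_eq_sum_mul_msize hkγ] at hγ1
  rw [msize_sum, msize_eq_sum_mul_msize hkγ]
  refine pow_mul_prod_pow_le_of_logConvex hMpos hM1 hlc hA k.support (fun δ hδ => ?_) _ hγ1
  exact one_le_msize fun h => Finsupp.mem_support_iff.mp hδ (h ▸ hk0)

theorem sum_product_univ_pow_msize_le {r : ℝ} (hr0 : 0 ≤ r) (hr : 4 * (n + 1) * (m + 1) * r ≤ 1)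
    {D : Finset (Fin n → ℕ)} (hD : (0 : Fin n → ℕ) ∉ D) :
    ∑ p ∈ D ×ˢ (univ : Finset (Fin m)), r ^ msize p.1 ≤ 1 / 2 := by
  have hn0 : (0 : ℝ) ≤ n := n.cast_nonneg
  have hm0 : (0 : ℝ) ≤ m := m.cast_nonneg
  have hr1 : r < 1 := by nlinarith [mul_nonneg hr0 (mul_nonneg hn0 hm0)]
  have hnr : 2 * n * r ≤ 1 := by nlinarith [mul_nonneg hr0 (mul_nonneg hn0 hm0)]
  calc ∑ p ∈ D ×ˢ (univ : Finset (Fin m)), r ^ msize p.1 = m * ∑ δ ∈ D, r ^ msize δ := by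
        simp [sum_product, mul_sum]
    _ ≤ m * (2 * n * r) := by
        gcongr
        exact (sum_pow_msize_le hr0 hr1 hD).trans (inv_one_sub_pow_sub_one_le hr0 hnr)
    _ ≤ 1 / 2 := by nlinarith [mul_nonneg hr0 hn0, mul_nonneg hr0 hm0]

theorem sum_mfact_div_prod_mfact_le (S : Finset ((Fin n → ℕ) →₀ (Fin m → ℕ)))
    (hS : ∀ k ∈ S, k 0 = 0 ∧ ∑ δ ∈ k.support, msize (k δ) • δ = γ) :
    ∑ k ∈ S, (mfact (∑ δ ∈ k.support, k δ) : ℝ) / ∏ δ ∈ k.support, (mfact (k δ) : ℝ)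
      ≤ 2 * (4 * (n + 1) * (m + 1) : ℝ) ^ msize γ := by
  classical
  set r : ℝ := (4 * (n + 1) * (m + 1))⁻¹
  have hr0 : 0 < r := by positivity
  have hr : 4 * (n + 1) * (m + 1) * r = 1 := mul_inv_cancel₀ (by positivity)
  set D := S.biUnion Finsupp.support
  set E := D ×ˢ (univ : Finset (Fin m))
  set t : (Fin n → ℕ) × Fin m → ℝ := fun p => r ^ msize p.1
  set flatten : ((Fin n → ℕ) →₀ (Fin m → ℕ)) → (Fin n → ℕ) × Fin m → ℕ :=
    fun k p => k p.1 p.2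
  have hsupp : ∀ k ∈ S, k.support ⊆ D := fun k hk δ hδ => mem_biUnion.mpr ⟨k, hk, hδ⟩
  have hD0 : (0 : Fin n → ℕ) ∉ D := by
    simp only [D, mem_biUnion, Finsupp.mem_support_iff, not_exists, not_and, not_not]
    exact fun k hk => (hS k hk).1
  have hweight : ∀ k ∈ S, ∏ p ∈ E, t p ^ flatten k p = r ^ msize γ := by
    intro k hk
    refine (prod_product_univ_pow k (hsupp k hk) fun δ => r ^ msize δ).trans ?_
    rw [msize_eq_sum_mul_msize (hS k hk).2, ← prod_pow_eq_pow_sum]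
    exact prod_congr rfl fun δ _ => by rw [← pow_mul, mul_comm]
  have htsum : ∑ p ∈ E, t p ≤ 1 / 2 := sum_product_univ_pow_msize_le hr0.le hr.le hD0
  have hflatten_inj : Set.InjOn flatten S := fun k _ l _ h =>
    Finsupp.ext fun δ => funext fun i => congrFun h (δ, i)
  have hflatten_supp : ∀ g ∈ S.image flatten, ∀ p, g p ≠ 0 → p ∈ E := by
    simp only [mem_image, forall_exists_index, and_imp, forall_apply_eq_imp_iff₂]
    intro k hk p hp
    refine mem_product.mpr ⟨hsupp k hk (Finsupp.mem_support_iff.mpr fun h => hp ?_), mem_univ _⟩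
    simp [flatten, h]
  have hmultinomial := sum_multinomial_mul_prod_pow_le E (fun p _ => by positivity) htsum
    (by norm_num) _ hflatten_supp
  rw [sum_image hflatten_inj] at hmultinomial
  have hsum_mul : (∑ k ∈ S, (mfact (∑ δ ∈ k.support, k δ) : ℝ) /
      ∏ δ ∈ k.support, (mfact (k δ) : ℝ)) * r ^ msize γ ≤ 2 := by
    rw [sum_mul]
    refine (sum_le_sum fun k hk => ?_).trans (hmultinomial.trans_eq (by norm_num))
    rw [← hweight k hk]
    exact mul_le_mul_of_nonneg_right (mfact_sum_div_prod_mfact_le_multinomial k (hsupp k hk))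
      (prod_nonneg fun p _ => by positivity)
  rw [← le_div_iff₀ (by positivity), div_eq_mul_inv, ← inv_pow] at hsum_mul
  simpa [r] using hsum_mul

end FaaDiBruno

/-- The sum over all admissible `k` is stated through its finite partial sums, `k` being encoded
as a finitely supported function on `ℕⁿ` that vanishes at `0`. -/
theorem statement_2_general (M : ℕ → ℝ) (hMpos : ∀ k, 0 < M k) (hM01 : 1 ≤ M 1)
    (hlc : ∀ k : ℕ, 1 ≤ k → (M k) ^ 2 ≤ M (k - 1) * M (k + 1))
    (A : ℝ) (hA : 0 < A) (m n : ℕ) :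
    ∃ B C : ℝ, 0 < B ∧ 0 < C ∧
      ∀ γ : Fin n → ℕ, γ ≠ 0 →
        ∀ S : Finset ((Fin n → ℕ) →₀ (Fin m → ℕ)),
          (∀ k ∈ S, k 0 = 0 ∧ ∑ δ ∈ k.support, msize (k δ) • δ = γ) →
          ∑ k ∈ S,
              ((mfact (∑ δ ∈ k.support, k δ) : ℝ) / ∏ δ ∈ k.support, (mfact (k δ) : ℝ)) *
                A ^ msize (∑ δ ∈ k.support, k δ) * M (msize (∑ δ ∈ k.support, k δ)) *
                ∏ δ ∈ k.support, M (msize δ) ^ msize (k δ)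
            ≤ B * C ^ msize γ * M (msize γ) := by
  refine ⟨2, max 1 A * M 1 * (4 * (n + 1) * (m + 1)), two_pos,
    mul_pos (mul_pos (lt_max_of_lt_left one_pos) (hMpos 1)) (by positivity), fun γ hγ S hS => ?_⟩
  have hweight0 : 0 ≤ (max 1 A * M 1) ^ msize γ * M (msize γ) :=
    mul_nonneg (pow_nonneg (mul_nonneg (le_max_of_le_left zero_le_one) (hMpos 1).le) _)
      (hMpos _).le
  calc _ ≤ ∑ k ∈ S, ((mfact (∑ δ ∈ k.support, k δ) : ℝ) / ∏ δ ∈ k.support, (mfact (k δ) : ℝ)) *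
          ((max 1 A * M 1) ^ msize γ * M (msize γ)) := by
        refine sum_le_sum fun k hk => ?_
        rw [mul_assoc, mul_assoc, ← mul_assoc (A ^ _)]
        exact mul_le_mul_of_nonneg_left
          (pow_mul_prod_pow_msize_le hMpos hM01 hlc hA (hS k hk).1 (hS k hk).2 hγ)
          (by positivity)
    _ = (∑ k ∈ S, (mfact (∑ δ ∈ k.support, k δ) : ℝ) / ∏ δ ∈ k.support, (mfact (k δ) : ℝ)) *
          ((max 1 A * M 1) ^ msize γ * M (msize γ)) := (sum_mul _ _ _).symm
    _ ≤ 2 * (4 * (n + 1) * (m + 1) : ℝ) ^ msize γ * ((max 1 A * M 1) ^ msize γ * M (msize γ)) :=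
        mul_le_mul_of_nonneg_right (sum_mfact_div_prod_mfact_le S hS) hweight0
    _ = 2 * (max 1 A * M 1 * (4 * (n + 1) * (m + 1))) ^ msize γ * M (msize γ) := by
        rw [mul_pow (max 1 A * M 1)]
        ring

/-- the Faà di Bruno coefficient estimate for a log-convex weight sequence.
The sum over all admissible finitely supported `k : (ℕⁿ \ {0}) → ℕᵐ` with
`Σ_δ |k(δ)|·δ = γ` is formalized as: all finite partial sums (over finsets of such `k`,
encoded as finitely supported functions vanishing at `0`) are bounded by `B·C^{|γ|}·M_{|γ|}`. -/
theorem statement_2 (M : ℕ → ℝ) (hMpos : ∀ k, 0 < M k) (hM0 : M 0 = 1) (hM01 : 1 ≤ M 1)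
    (hlc : ∀ k : ℕ, 1 ≤ k → (M k) ^ 2 ≤ M (k - 1) * M (k + 1))
    (A : ℝ) (hA : 0 < A) (m n : ℕ) (hm : 1 ≤ m) (hn : 1 ≤ n) :
    ∃ B C : ℝ, 0 < B ∧ 0 < C ∧
      ∀ γ : Fin n → ℕ, γ ≠ 0 →
        ∀ S : Finset ((Fin n → ℕ) →₀ (Fin m → ℕ)),
          (∀ k ∈ S, k 0 = 0 ∧ ∑ δ ∈ k.support, msize (k δ) • δ = γ) →
          ∑ k ∈ S,
              ((mfact (∑ δ ∈ k.support, k δ) : ℝ) / ∏ δ ∈ k.support, (mfact (k δ) : ℝ)) *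
                A ^ msize (∑ δ ∈ k.support, k δ) * M (msize (∑ δ ∈ k.support, k δ)) *
                ∏ δ ∈ k.support, M (msize δ) ^ msize (k δ)
            ≤ B * C ^ msize γ * M (msize γ) :=
  statement_2_general M hMpos hM01 hlc A hA m n
end

section
/- Let M = (M_k) be a log-convex weight sequence. Let E, F, G be Banach spaces, let U ⊆ E and V ⊆ F be open, and let g : U → V and f : V → G be smooth maps. Assume there exist C_f, ρ_f > 0 with ‖f^{(k)}(y)‖ ≤ C_f·ρ_f^k·k!·M_k for all y ∈ V and all k ∈ ℕ, and there exist C_g, ρ_g > 0 with ‖g^{(k)}(x)‖ ≤ C_g·ρ_g^k·k!·M_k for all x ∈ U and all k ≥ 1. Then there exist C, ρ > 0 such that ‖(f∘g)^{(k)}(x)‖ ≤ C·ρ^k·k!·M_k for all x ∈ U and all k ∈ ℕ. -/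
open scoped ContDiff
open Set
set_option maxHeartbeats 1000000

section Aux

/-- Ratios of a log-convex sequence are monotone. -/
private lemma dc_ratio_mono (M : ℕ → ℝ) (hMpos : ∀ k, 0 < M k)
    (hlc : ∀ k : ℕ, 1 ≤ k → (M k) ^ 2 ≤ M (k - 1) * M (k + 1)) :
    Monotone (fun k => M (k + 1) / M k) := by
  apply monotone_nat_of_le_succ
  intro k
  have h := hlc (k + 1) (by omega)
  simp only [Nat.add_sub_cancel] at h
  rw [div_le_div_iff₀ (hMpos k) (hMpos (k + 1))]
  nlinarith [hMpos k, hMpos (k + 1), hMpos (k + 2)]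

/-- Key log-convexity consequence: `M (a+1) * M (b+1) ≤ M 1 * M (a+b+1)`. -/
private lemma dc_MM (M : ℕ → ℝ) (hMpos : ∀ k, 0 < M k)
    (hr : Monotone (fun k => M (k + 1) / M k)) :
    ∀ a b : ℕ, M (a + 1) * M (b + 1) ≤ M 1 * M (a + b + 1) := by
  intro a
  induction a with
  | zero => intro b; simp [le_refl, mul_comm]
  | succ a IH =>
    intro b
    have h1 : M (a + 2) / M (a + 1) ≤ M (a + b + 2) / M (a + b + 1) :=
      hr (show a + 1 ≤ a + b + 1 by omega)
    have hpos1 := hMpos (a + 1)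
    have hpos2 := hMpos (a + b + 1)
    calc M (a + 1 + 1) * M (b + 1)
        = (M (a + 2) / M (a + 1)) * (M (a + 1) * M (b + 1)) := by
          have h0 : M (a + 1) ≠ 0 := ne_of_gt hpos1
          field_simp
      _ ≤ (M (a + b + 2) / M (a + b + 1)) * (M 1 * M (a + b + 1)) := by
          exact mul_le_mul h1 (IH b) (mul_pos (hMpos _) (hMpos _)).le (div_pos (hMpos _) (hMpos _)).le
      _ = M 1 * M (a + 1 + b + 1) := by
          have : a + 1 + b + 1 = a + b + 2 := by omega
          rw [this]
          have h0 : M (a + b + 1) ≠ 0 := ne_of_gt hpos2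
          field_simp

/-- Factorial shift inequality. -/
private lemma dc_fact1 (m : ℕ) : ∀ i n : ℕ, i ≤ n →
    (i + m + 1).factorial * n.factorial ≤ (n + m + 1).factorial * i.factorial := by
  intro i n hin
  induction n, hin using Nat.le_induction with
  | base => exact le_rfl
  | succ n hin IH =>
    have h1 : (i + m + 1).factorial * (n + 1).factorial
        = (n + 1) * ((i + m + 1).factorial * n.factorial) := by
      rw [Nat.factorial_succ n]; ring
    have h2 : (n + 1) * ((i + m + 1).factorial * n.factorial)
        ≤ (n + 1) * ((n + m + 1).factorial * i.factorial) :=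
      Nat.mul_le_mul_left _ IH
    have h3 : (n + 1) * ((n + m + 1).factorial * i.factorial)
        ≤ (n + m + 2) * ((n + m + 1).factorial * i.factorial) :=
      Nat.mul_le_mul_right _ (by omega)
    have h4 : (n + m + 2) * ((n + m + 1).factorial * i.factorial)
        = (n + 1 + m + 1).factorial * i.factorial := by
      have : n + 1 + m + 1 = (n + m + 1) + 1 := by omega
      rw [this, Nat.factorial_succ (n + m + 1)]; ring
    omega

/-- Combinatorial bound for the terms in the Leibniz sum. -/
private lemma dc_NL (m i j n : ℕ) (hij : i + j = n) :
    n.choose i * (i + m + 1).factorial * (j + 1).factorial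
      ≤ (j + 1) * (n + m + 1).factorial := by
  have hin : i ≤ n := by omega
  have key : n.choose i * i.factorial * j.factorial = n.factorial := by
    have := Nat.choose_mul_factorial_mul_factorial hin
    rw [show n - i = j by omega] at this
    exact this
  have hf := dc_fact1 m i n hin
  -- multiply target by i.factorial and cancel
  have hpos : 0 < i.factorial := Nat.factorial_pos i
  have expand : (n.choose i * (i + m + 1).factorial * (j + 1).factorial) * i.factorial
      = (j + 1) * ((i + m + 1).factorial * n.factorial) := by
    rw [Nat.factorial_succ j]
    calc (n.choose i * (i + m + 1).factorial * ((j + 1) * j.factorial)) * i.factorial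
        = (j + 1) * ((i + m + 1).factorial * (n.choose i * i.factorial * j.factorial)) := by ring
      _ = (j + 1) * ((i + m + 1).factorial * n.factorial) := by rw [key]
  have : (n.choose i * (i + m + 1).factorial * (j + 1).factorial) * i.factorial
      ≤ ((j + 1) * (n + m + 1).factorial) * i.factorial := by
    rw [expand]
    calc (j + 1) * ((i + m + 1).factorial * n.factorial)
        ≤ (j + 1) * ((n + m + 1).factorial * i.factorial) := Nat.mul_le_mul_left _ hf
      _ = ((j + 1) * (n + m + 1).factorial) * i.factorial := by ring
  exact Nat.le_of_mul_le_mul_right this hpos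

end Aux

universe u

private theorem dc_aux {E : Type*} [NormedAddCommGroup E] [NormedSpace ℝ E]
    {Fu : Type u} [NormedAddCommGroup Fu] [NormedSpace ℝ Fu]
    (M : ℕ → ℝ) (hMpos : ∀ k, 0 < M k) (hM1 : 1 ≤ M 1)
    (hMM : ∀ a b : ℕ, M (a + 1) * M (b + 1) ≤ M 1 * M (a + b + 1))
    {f : E → Fu} {s : Set E} {t : Set Fu} {x : E}
    (hs : UniqueDiffOn ℝ s) (ht : UniqueDiffOn ℝ t) (hx : x ∈ s) (hst : Set.MapsTo f s t)
    (hf : ContDiffOn ℝ ∞ f s)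
    {B D : ℝ} (hB : 1 ≤ B) (hD : 1 ≤ D)
    (hfD : ∀ i : ℕ, 1 ≤ i → ‖iteratedFDerivWithin ℝ i f s x‖ ≤ D ^ i * (i.factorial : ℝ) * M i) :
    ∀ n : ℕ, ∀ (Gu : Type u) (_ : NormedAddCommGroup Gu), ∀ (_ : NormedSpace ℝ Gu),
      ∀ (g : Fu → Gu), ContDiffOn ℝ ∞ g t → ∀ (C : ℝ), 0 ≤ C → ∀ (m : ℕ),
      (∀ i : ℕ, ‖iteratedFDerivWithin ℝ i g t (f x)‖
          ≤ C * B ^ i * (((i + m).factorial : ℝ) / (m.factorial : ℝ)) * (M (i + m) / M m)) →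
      ‖iteratedFDerivWithin ℝ n (g ∘ f) s x‖
        ≤ C * (4 * B * D * M 1) ^ n * (((n + m).factorial : ℝ) / (m.factorial : ℝ))
            * (M (n + m) / M m) := by
  have hB0 : (0:ℝ) < B := lt_of_lt_of_le one_pos hB
  have hD0 : (0:ℝ) < D := lt_of_lt_of_le one_pos hD
  have hM10 : (0:ℝ) < M 1 := hMpos 1
  intro n
  induction n using Nat.case_strong_induction_on with
  | hz =>
    intro Gu _ _ g hg C hC0 m hgC
    have h0 := hgC 0
    simp only [norm_iteratedFDerivWithin_zero, pow_zero, Nat.zero_add, zero_add] at h0 ⊢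
    simpa [Function.comp] using h0
  | hi n IH =>
    intro Gu instG instG2 g hg C hC0 m hgC
    have hMm0 : M m ≠ 0 := ne_of_gt (hMpos m)
    have hMm10 : M (m+1) ≠ 0 := ne_of_gt (hMpos (m+1))
    have hfm0 : ((m.factorial : ℝ)) ≠ 0 := by positivity
    have hfm10 : (((m+1).factorial : ℝ)) ≠ 0 := by positivity
    -- smoothness of the derivative of g
    have hg' : ContDiffOn ℝ ∞ (fderivWithin ℝ g t) t :=
      hg.fderivWithin ht (le_of_eq rfl)
    have hf' : ContDiffOn ℝ ∞ (fderivWithin ℝ f s) s :=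
      hf.fderivWithin hs (le_of_eq rfl)
    set C' : ℝ := C * B * (((m+1).factorial : ℝ) / (m.factorial : ℝ)) * (M (m+1) / M m) with hC'def
    have hC'0 : 0 ≤ C' := by
      have h1 : (0:ℝ) ≤ ((m+1).factorial : ℝ) / (m.factorial : ℝ) := by positivity
      have h2 : (0:ℝ) ≤ M (m+1) / M m := le_of_lt (div_pos (hMpos _) (hMpos _))
      exact mul_nonneg (mul_nonneg (mul_nonneg hC0 hB0.le) h1) h2
    -- bound the derivatives of g' at f x
    have hgC' : ∀ j : ℕ, ‖iteratedFDerivWithin ℝ j (fderivWithin ℝ g t) t (f x)‖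
        ≤ C' * B ^ j * (((j + (m+1)).factorial : ℝ) / ((m+1).factorial : ℝ))
          * (M (j + (m+1)) / M (m+1)) := by
      intro j
      have e : ‖iteratedFDerivWithin ℝ j (fderivWithin ℝ g t) t (f x)‖
          = ‖iteratedFDerivWithin ℝ (j+1) g t (f x)‖ := by
        rw [iteratedFDerivWithin_succ_eq_comp_right ht (hst hx), Function.comp_apply,
          LinearIsometryEquiv.norm_map]
      rw [e]
      refine (hgC (j+1)).trans (le_of_eq ?_)
      have hj : j + 1 + m = j + (m + 1) := by omega
      rw [hj, hC'def]
      field_simp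
      ring
    -- inductive bound for g' ∘ f
    have I : ∀ i ∈ Finset.range (n+1),
        ‖iteratedFDerivWithin ℝ i (fderivWithin ℝ g t ∘ f) s x‖
          ≤ C' * (4 * B * D * M 1) ^ i * (((i + (m+1)).factorial : ℝ) / ((m+1).factorial : ℝ))
            * (M (i + (m+1)) / M (m+1)) := by
      intro i hi
      exact IH i (Finset.mem_range_succ_iff.1 hi) (Fu →L[ℝ] Gu) inferInstance inferInstance
        (fderivWithin ℝ g t) hg' C' hC'0 (m+1) hgC'
    -- bound for derivatives of f'
    have J : ∀ i : ℕ, ‖iteratedFDerivWithin ℝ (n - i) (fderivWithin ℝ f s) s x‖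
        ≤ D ^ (n - i + 1) * (((n - i + 1).factorial : ℝ)) * M (n - i + 1) := by
      intro i
      have e : ‖iteratedFDerivWithin ℝ (n - i) (fderivWithin ℝ f s) s x‖
          = ‖iteratedFDerivWithin ℝ (n - i + 1) f s x‖ := by
        rw [iteratedFDerivWithin_succ_eq_comp_right hs hx, Function.comp_apply,
          LinearIsometryEquiv.norm_map]
      rw [e]
      exact hfD _ (by omega)
    have hninf : ((n : ℕ∞) : WithTop ℕ∞) ≤ ∞ := by exact_mod_cast le_top
    calc ‖iteratedFDerivWithin ℝ (n+1) (g ∘ f) s x‖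
        = ‖iteratedFDerivWithin ℝ n (fderivWithin ℝ (g ∘ f) s) s x‖ := by
          rw [iteratedFDerivWithin_succ_eq_comp_right hs hx, Function.comp_apply,
            LinearIsometryEquiv.norm_map]
      _ = ‖iteratedFDerivWithin ℝ n (fun y : E => ContinuousLinearMap.compL ℝ E Fu Gu
            (fderivWithin ℝ g t (f y)) (fderivWithin ℝ f s y)) s x‖ := by
          congr 1
          refine iteratedFDerivWithin_congr (fun y hy => ?_) hx _
          apply fderivWithin_comp _ _ _ hst (hs y hy)
          · exact hg.differentiableOn (by simp) _ (hst hy)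
          · exact hf.differentiableOn (by simp) _ hy
      _ ≤ ∑ i ∈ Finset.range (n + 1),
          (n.choose i : ℝ) * ‖iteratedFDerivWithin ℝ i (fderivWithin ℝ g t ∘ f) s x‖ *
            ‖iteratedFDerivWithin ℝ (n - i) (fderivWithin ℝ f s) s x‖ := by
          have A1 : ContDiffOn ℝ (n : ℕ) (fderivWithin ℝ g t ∘ f) s :=
            (hg'.comp hf hst).of_le hninf
          have B1 : ContDiffOn ℝ (n : ℕ) (fderivWithin ℝ f s) s := hf'.of_le hninf
          exact (ContinuousLinearMap.compL ℝ E Fu Gu).norm_iteratedFDerivWithin_le_of_bilinear_of_le_one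
            A1 B1 hs hx le_rfl (ContinuousLinearMap.norm_compL_le ℝ E Fu Gu)
      _ ≤ ∑ i ∈ Finset.range (n + 1),
          (n.choose i : ℝ) * (C' * (4 * B * D * M 1) ^ i
              * (((i + (m+1)).factorial : ℝ) / ((m+1).factorial : ℝ)) * (M (i + (m+1)) / M (m+1)))
            * (D ^ (n - i + 1) * (((n - i + 1).factorial : ℝ)) * M (n - i + 1)) := by
          apply Finset.sum_le_sum
          intro i hi
          have h1 := I i hi
          have h2 := J i
          have hn1 : (0:ℝ) ≤ (n.choose i : ℝ) := by positivity
          have hX' : (0:ℝ) ≤ C' * (4 * B * D * M 1) ^ i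
              * (((i + (m+1)).factorial : ℝ) / ((m+1).factorial : ℝ))
              * (M (i + (m+1)) / M (m+1)) := by
            have := hMpos (i+(m+1)); have := hMpos (m+1); positivity
          exact mul_le_mul (mul_le_mul_of_nonneg_left h1 hn1) h2 (norm_nonneg _)
            (mul_nonneg hn1 hX')
      _ ≤ ∑ i ∈ Finset.range (n + 1),
          C * (4 * B * D * M 1) ^ (n+1) * (((n + 1 + m).factorial : ℝ) / (m.factorial : ℝ))
            * (M (n + 1 + m) / M m) * ((1/2 : ℝ) ^ (n - i) * (1/2)) := by
          apply Finset.sum_le_sum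
          intro i hi
          have hin : i ≤ n := Finset.mem_range_succ_iff.1 hi
          obtain ⟨j, hij⟩ : ∃ j, i + j = n := ⟨n - i, by omega⟩
          have hni : n - i = j := by omega
          rw [hni]
          -- combinatorial bound
          have key1 : ((n.choose i * (i + m + 1).factorial * (j + 1).factorial : ℕ) : ℝ)
              ≤ (((j + 1) * (n + m + 1).factorial : ℕ) : ℝ) := by
            exact_mod_cast dc_NL m i j n hij
          -- log-convexity bound
          have key2 : M (i + m + 1) * M (j + 1) ≤ M 1 * M (n + m + 1) := by
            have h := hMM (i + m) j
            rwa [show i + m + j + 1 = n + m + 1 by omega] at h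
          -- scalar crunch
          have key3 : B * M 1 * (((j+1 : ℕ)) : ℝ) * D ^ (j+1) * (4 * B * D * M 1) ^ i
              ≤ (4 * B * D * M 1) ^ (n+1) * ((1/2 : ℝ) ^ j * (1/2)) := by
            have hjp : ((j:ℝ) + 1) ≤ 2 ^ (j+1) := by
              have := Nat.lt_two_pow_self (n := j+1)
              have h2 : ((j+1 : ℕ) : ℝ) ≤ ((2^(j+1) : ℕ) : ℝ) := by exact_mod_cast this.le
              push_cast at h2; linarith
            have hBp : B ≤ B ^ (j+1) := le_self_pow₀ hB (Nat.succ_ne_zero j)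
            have hMp : M 1 ≤ (M 1) ^ (j+1) := le_self_pow₀ hM1 (Nat.succ_ne_zero j)
            have step1 : B * M 1 * (((j+1 : ℕ)) : ℝ) * D ^ (j+1)
                ≤ B ^ (j+1) * (M 1) ^ (j+1) * 2 ^ (j+1) * D ^ (j+1) := by
              push_cast
              have h1 : B * M 1 * ((j:ℝ) + 1) ≤ B ^ (j+1) * (M 1) ^ (j+1) * 2 ^ (j+1) := by
                have := mul_le_mul (mul_le_mul hBp hMp hM10.le (by positivity)) hjp
                  (by positivity) (by positivity)
                linarith
              exact mul_le_mul_of_nonneg_right h1 (by positivity)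
            have step2 : B ^ (j+1) * (M 1) ^ (j+1) * 2 ^ (j+1) * D ^ (j+1)
                = (4 * B * D * M 1) ^ (j+1) * ((1/2 : ℝ) ^ j * (1/2)) := by
              have : ((1/2 : ℝ) ^ j * (1/2)) = (1/2 : ℝ) ^ (j+1) := by rw [pow_succ]
              rw [this, ← mul_pow, ← mul_pow, ← mul_pow, ← mul_pow]
              ring_nf
            have step3 : (4 * B * D * M 1) ^ (j+1) * (4 * B * D * M 1) ^ i
                = (4 * B * D * M 1) ^ (n+1) := by
              rw [← pow_add]
              congr 1
              omega
            calc B * M 1 * (((j+1 : ℕ)) : ℝ) * D ^ (j+1) * (4 * B * D * M 1) ^ i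
                ≤ (B ^ (j+1) * (M 1) ^ (j+1) * 2 ^ (j+1) * D ^ (j+1)) * (4 * B * D * M 1) ^ i := by
                  exact mul_le_mul_of_nonneg_right step1 (by positivity)
              _ = ((4 * B * D * M 1) ^ (j+1) * ((1/2 : ℝ) ^ j * (1/2))) * (4 * B * D * M 1) ^ i := by
                  rw [step2]
              _ = (4 * B * D * M 1) ^ (n+1) * ((1/2 : ℝ) ^ j * (1/2)) := by
                  rw [mul_right_comm, step3]
          -- assemble
          have e1 : (n.choose i : ℝ) * (C' * (4 * B * D * M 1) ^ i
                * (((i + (m+1)).factorial : ℝ) / ((m+1).factorial : ℝ)) * (M (i + (m+1)) / M (m+1)))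
              * (D ^ (j + 1) * (((j + 1).factorial : ℝ)) * M (j + 1))
              = C * B * (4 * B * D * M 1) ^ i * D ^ (j+1)
                * (((n.choose i * (i + m + 1).factorial * (j + 1).factorial : ℕ) : ℝ) / (m.factorial : ℝ))
                * ((M (i + m + 1) * M (j + 1)) / M m) := by
            rw [hC'def]
            rw [show i + (m+1) = i + m + 1 by omega]
            push_cast
            field_simp
          rw [e1]
          calc C * B * (4 * B * D * M 1) ^ i * D ^ (j+1)
                * (((n.choose i * (i + m + 1).factorial * (j + 1).factorial : ℕ) : ℝ) / (m.factorial : ℝ))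
                * ((M (i + m + 1) * M (j + 1)) / M m)
              ≤ C * B * (4 * B * D * M 1) ^ i * D ^ (j+1)
                * ((((j + 1) * (n + m + 1).factorial : ℕ) : ℝ) / (m.factorial : ℝ))
                * ((M 1 * M (n + m + 1)) / M m) := by
                have hbase : (0:ℝ) ≤ C * B * (4 * B * D * M 1) ^ i * D ^ (j+1) := by positivity
                have d1 := (div_le_div_iff_of_pos_right (show (0:ℝ) < (m.factorial:ℝ) by positivity)).2 key1
                have d2 := (div_le_div_iff_of_pos_right (hMpos m)).2 key2
                have hnum1 : (0:ℝ) ≤ (((n.choose i * (i + m + 1).factorial * (j + 1).factorial : ℕ) : ℝ) / (m.factorial : ℝ)) := by positivity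
                have hnum2 : (0:ℝ) ≤ ((M (i + m + 1) * M (j + 1)) / M m) := by
                  have := hMpos (i+m+1); have := hMpos (j+1); have := hMpos m; positivity
                exact mul_le_mul (mul_le_mul_of_nonneg_left d1 hbase) d2 hnum2
                  (mul_nonneg hbase (le_trans hnum1 d1))
            _ = (B * M 1 * (((j+1 : ℕ)) : ℝ) * D ^ (j+1) * (4 * B * D * M 1) ^ i)
                * (C * (((n + m + 1).factorial : ℝ) / (m.factorial : ℝ)) * (M (n + m + 1) / M m)) := by
                push_cast
                ring
            _ ≤ ((4 * B * D * M 1) ^ (n+1) * ((1/2 : ℝ) ^ j * (1/2)))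
                * (C * (((n + m + 1).factorial : ℝ) / (m.factorial : ℝ)) * (M (n + m + 1) / M m)) := by
                apply mul_le_mul_of_nonneg_right key3
                have := hMpos (n+m+1); have := hMpos m
                have hf0 : (0:ℝ) ≤ ((n + m + 1).factorial : ℝ) / (m.factorial : ℝ) := by positivity
                have hm0 : (0:ℝ) ≤ M (n + m + 1) / M m := by positivity
                exact mul_nonneg (mul_nonneg hC0 hf0) hm0
            _ = C * (4 * B * D * M 1) ^ (n+1) * (((n + 1 + m).factorial : ℝ) / (m.factorial : ℝ))
                * (M (n + 1 + m) / M m) * ((1/2 : ℝ) ^ j * (1/2)) := by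
                rw [show n + 1 + m = n + m + 1 by omega]
                ring
      _ ≤ C * (4 * B * D * M 1) ^ (n+1) * (((n + 1 + m).factorial : ℝ) / (m.factorial : ℝ))
            * (M (n + 1 + m) / M m) := by
          rw [← Finset.mul_sum]
          have hsum : ∑ i ∈ Finset.range (n+1), ((1/2:ℝ)^(n-i) * (1/2)) ≤ 1 := by
            rw [← Finset.sum_mul]
            have e : ∑ i ∈ Finset.range (n+1), ((1/2:ℝ))^(n-i)
                = ∑ i ∈ Finset.range (n+1), ((1/2:ℝ))^i := by
              simpa using Finset.sum_range_reflect (fun i => ((1/2:ℝ))^i) (n+1)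
            rw [e]
            calc (∑ i ∈ Finset.range (n+1), ((1/2:ℝ))^i) * (1/2) ≤ 2 * (1/2) := by
                  gcongr
                  exact sum_geometric_two_le _
              _ = 1 := by norm_num
          have hterm : (0:ℝ) ≤ C * (4 * B * D * M 1) ^ (n+1)
              * (((n + 1 + m).factorial : ℝ) / (m.factorial : ℝ)) * (M (n + 1 + m) / M m) := by
            have h1 : (0:ℝ) ≤ (4 * B * D * M 1) ^ (n+1) := by positivity
            have h2 : (0:ℝ) ≤ (((n + 1 + m).factorial : ℝ) / (m.factorial : ℝ)) := by positivity
            have h3 : (0:ℝ) ≤ (M (n + 1 + m) / M m) := by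
              have := hMpos (n+1+m); have := hMpos m; positivity
            exact mul_nonneg (mul_nonneg (mul_nonneg hC0 h1) h2) h3
          exact mul_le_of_le_one_right hterm hsum

universe uE uF uG

private theorem dc_comp {E : Type uE} [NormedAddCommGroup E] [NormedSpace ℝ E]
    {F : Type uF} [NormedAddCommGroup F] [NormedSpace ℝ F]
    {G : Type uG} [NormedAddCommGroup G] [NormedSpace ℝ G]
    (M : ℕ → ℝ) (hMpos : ∀ k, 0 < M k) (hM0 : M 0 = 1) (hM1 : 1 ≤ M 1)
    (hMM : ∀ a b : ℕ, M (a + 1) * M (b + 1) ≤ M 1 * M (a + b + 1))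
    {f : E → F} {g : F → G} {s : Set E} {t : Set F} {x : E} (n : ℕ)
    (hs : UniqueDiffOn ℝ s) (ht : UniqueDiffOn ℝ t) (hx : x ∈ s) (hst : Set.MapsTo f s t)
    (hf : ContDiffOn ℝ ∞ f s) (hg : ContDiffOn ℝ ∞ g t)
    {B D C : ℝ} (hB : 1 ≤ B) (hD : 1 ≤ D) (hC0 : 0 ≤ C)
    (hfD : ∀ i : ℕ, 1 ≤ i → ‖iteratedFDerivWithin ℝ i f s x‖ ≤ D ^ i * (i.factorial : ℝ) * M i)
    (hgC : ∀ i : ℕ, ‖iteratedFDerivWithin ℝ i g t (f x)‖ ≤ C * B ^ i * (i.factorial : ℝ) * M i) :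
    ‖iteratedFDerivWithin ℝ n (g ∘ f) s x‖
      ≤ C * (4 * B * D * M 1) ^ n * (n.factorial : ℝ) * M n := by
  let Fu : Type max uF uG := ULift.{uG, uF} F
  let Gu : Type max uF uG := ULift.{uF, uG} G
  have isoF : Fu ≃ₗᵢ[ℝ] F := LinearIsometryEquiv.ulift ℝ F
  have isoG : Gu ≃ₗᵢ[ℝ] G := LinearIsometryEquiv.ulift ℝ G
  let fu : E → Fu := isoF.symm ∘ f
  let gu : Fu → Gu := isoG.symm ∘ g ∘ isoF
  let tu := isoF ⁻¹' t
  have htu : UniqueDiffOn ℝ tu := isoF.toContinuousLinearEquiv.uniqueDiffOn_preimage_iff.2 ht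
  have hstu : Set.MapsTo fu s tu := fun y hy ↦ by
    simpa only [fu, tu, Set.mem_preimage, Function.comp_apply,
      LinearIsometryEquiv.apply_symm_apply] using hst hy
  have Ffu : isoF (fu x) = f x := by
    simp only [fu, Function.comp_apply, LinearIsometryEquiv.apply_symm_apply]
  have hfu : ContDiffOn ℝ ∞ fu s := (isoF.symm.contDiff.of_le le_top).comp_contDiffOn hf
  have hgu : ContDiffOn ℝ ∞ gu tu :=
    (isoG.symm.contDiff.of_le le_top).comp_contDiffOn
      (hg.comp_continuousLinearMap (isoF : Fu →L[ℝ] F))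
  have Nfu : ∀ i, ‖iteratedFDerivWithin ℝ i fu s x‖ = ‖iteratedFDerivWithin ℝ i f s x‖ := by
    intro i
    rw [LinearIsometryEquiv.norm_iteratedFDerivWithin_comp_left _ _ hs hx]
  have Ngu : ∀ i,
      ‖iteratedFDerivWithin ℝ i gu tu (fu x)‖ = ‖iteratedFDerivWithin ℝ i g t (f x)‖ := by
    intro i
    rw [LinearIsometryEquiv.norm_iteratedFDerivWithin_comp_left _ _ htu (hstu hx)]
    rw [LinearIsometryEquiv.norm_iteratedFDerivWithin_comp_right _ _ ht, Ffu]
    rw [Ffu]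
    exact hst hx
  have Nfgu :
      ‖iteratedFDerivWithin ℝ n (g ∘ f) s x‖ = ‖iteratedFDerivWithin ℝ n (gu ∘ fu) s x‖ := by
    have e : gu ∘ fu = isoG.symm ∘ g ∘ f := by
      ext y
      simp only [fu, gu, Function.comp_apply, LinearIsometryEquiv.map_eq_iff,
        LinearIsometryEquiv.apply_symm_apply]
    rw [e, LinearIsometryEquiv.norm_iteratedFDerivWithin_comp_left _ _ hs hx]
  rw [Nfgu]
  have hfD' : ∀ i : ℕ, 1 ≤ i →
      ‖iteratedFDerivWithin ℝ i fu s x‖ ≤ D ^ i * (i.factorial : ℝ) * M i := by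
    intro i hi1; rw [Nfu]; exact hfD i hi1
  have hgC' : ∀ i : ℕ, ‖iteratedFDerivWithin ℝ i gu tu (fu x)‖
      ≤ C * B ^ i * ((i + 0).factorial / (Nat.factorial 0 : ℝ)) * (M (i + 0) / M 0) := by
    intro i
    rw [Ngu]
    simpa [hM0] using hgC i
  have h := dc_aux M hMpos hM1 hMM hs htu hx hstu hfu hB hD hfD' n Gu inferInstance
    inferInstance gu hgu C hC0 0 hgC'
  simpa [hM0] using h

/-- Denjoy–Carleman stability of global `M`-estimates under composition:
if `f` satisfies `‖f^(k)‖ ≤ C_f ρ_f^k k! M_k` on `V` for all `k` and `g` satisfies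
`‖g^(k)‖ ≤ C_g ρ_g^k k! M_k` on `U` for all `k ≥ 1`, with `M` a log-convex weight
sequence, then `f ∘ g` satisfies `‖(f∘g)^(k)‖ ≤ C ρ^k k! M_k` on `U` for all `k`. -/
theorem statement_5 (M : ℕ → ℝ) (hMpos : ∀ k, 0 < M k) (hM0 : M 0 = 1) (hM01 : 1 ≤ M 1)
    (hlc : ∀ k : ℕ, 1 ≤ k → (M k) ^ 2 ≤ M (k - 1) * M (k + 1))
    {E F G : Type*}
    [NormedAddCommGroup E] [NormedSpace ℝ E] [CompleteSpace E]
    [NormedAddCommGroup F] [NormedSpace ℝ F] [CompleteSpace F]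
    [NormedAddCommGroup G] [NormedSpace ℝ G] [CompleteSpace G]
    (U : Set E) (V : Set F) (hU : IsOpen U) (hV : IsOpen V)
    (g : E → F) (f : F → G)
    (hg : ContDiffOn ℝ (⊤ : ℕ∞) g U) (hf : ContDiffOn ℝ (⊤ : ℕ∞) f V)
    (hgUV : Set.MapsTo g U V)
    (hfb : ∃ Cf ρf : ℝ, 0 < Cf ∧ 0 < ρf ∧ ∀ (k : ℕ), ∀ y ∈ V,
      ‖iteratedFDerivWithin ℝ k f V y‖ ≤ Cf * ρf ^ k * (Nat.factorial k : ℝ) * M k)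
    (hgb : ∃ Cg ρg : ℝ, 0 < Cg ∧ 0 < ρg ∧ ∀ (k : ℕ), 1 ≤ k → ∀ x ∈ U,
      ‖iteratedFDerivWithin ℝ k g U x‖ ≤ Cg * ρg ^ k * (Nat.factorial k : ℝ) * M k) :
    ∃ C ρ : ℝ, 0 < C ∧ 0 < ρ ∧ ∀ (k : ℕ), ∀ x ∈ U,
      ‖iteratedFDerivWithin ℝ k (f ∘ g) U x‖ ≤ C * ρ ^ k * (Nat.factorial k : ℝ) * M k := by
  obtain ⟨Cf, ρf, hCf, hρf, hfB⟩ := hfb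
  obtain ⟨Cg, ρg, hCg, hρg, hgB⟩ := hgb
  have hMM : ∀ a b : ℕ, M (a + 1) * M (b + 1) ≤ M 1 * M (a + b + 1) :=
    dc_MM M hMpos (dc_ratio_mono M hMpos hlc)
  set B : ℝ := max ρf 1 with hBdef
  set D : ℝ := max Cg 1 * max ρg 1 with hDdef
  have hB : 1 ≤ B := le_max_right _ _
  have hD : 1 ≤ D := one_le_mul_of_one_le_of_one_le (le_max_right _ _) (le_max_right _ _)
  refine ⟨Cf, 4 * B * D * M 1, hCf, by positivity, ?_⟩
  intro k x hx
  have hfC : ∀ i : ℕ, ‖iteratedFDerivWithin ℝ i f V (g x)‖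
      ≤ Cf * B ^ i * (i.factorial : ℝ) * M i := by
    intro i
    refine (hfB i (g x) (hgUV hx)).trans ?_
    have : ρf ^ i ≤ B ^ i := pow_le_pow_left₀ hρf.le (le_max_left _ _) i
    have hMi := hMpos i
    have hfi : (0:ℝ) ≤ (i.factorial : ℝ) := by positivity
    gcongr
  have hgD : ∀ i : ℕ, 1 ≤ i → ‖iteratedFDerivWithin ℝ i g U x‖
      ≤ D ^ i * (i.factorial : ℝ) * M i := by
    intro i hi1
    refine (hgB i hi1 x hx).trans ?_
    have h1 : Cg * ρg ^ i ≤ D ^ i := by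
      rw [hDdef, mul_pow]
      have h2 : Cg ≤ (max Cg 1) ^ i :=
        le_trans (le_max_left _ _) (le_self_pow₀ (le_max_right _ _) (by omega))
      have h3 : ρg ^ i ≤ (max ρg 1) ^ i := pow_le_pow_left₀ hρg.le (le_max_left _ _) i
      exact mul_le_mul h2 h3 (by positivity) (by positivity)
    have hMi := hMpos i
    have hfi : (0:ℝ) ≤ (i.factorial : ℝ) := by positivity
    calc Cg * ρg ^ i * (i.factorial : ℝ) * M i
        = (Cg * ρg ^ i) * ((i.factorial : ℝ) * M i) := by ring
      _ ≤ D ^ i * ((i.factorial : ℝ) * M i) := by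
          exact mul_le_mul_of_nonneg_right h1 (by positivity)
      _ = D ^ i * (i.factorial : ℝ) * M i := by ring
  exact dc_comp M hMpos hM0 hM01 hMM k hU.uniqueDiffOn hV.uniqueDiffOn hx hgUV
    (hg.of_le (by simp)) (hf.of_le (by simp)) hB hD hCf.le hgD hfC
end

section
/- Let 1 ≤ p < ∞ and let g : ℝⁿ → ℝⁿ be a smooth diffeomorphism (a smooth bijection with smooth inverse) such that inf_{x∈ℝⁿ} |det Dg(x)| > 0 and sup_{x∈ℝⁿ} ‖g^{(k)}(x)‖ < ∞ for every k ≥ 1. Let f : ℝⁿ → ℝⁿ be smooth with every partial derivative ∂^α f_i (α ∈ ℕⁿ, including α = 0, i = 1,…,n) belonging to L^p(ℝⁿ). Then every partial derivative ∂^α((f∘g)_i) belongs to L^p(ℝⁿ). -/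
open MeasureTheory
open scoped ContDiff ENNReal

/-- Iterated partial derivative along a list of coordinate directions. -/
noncomputable def pderivList {n : ℕ} :
    List (Fin n) → (EuclideanSpace ℝ (Fin n) → ℝ) → EuclideanSpace ℝ (Fin n) → ℝ
  | [], f => f
  | i :: t, f => pderivList t (fun x => fderiv ℝ f x (EuclideanSpace.single i 1))

/-- The partial derivative `∂^α f` associated with a multi-index `α`. -/
noncomputable def pderivMulti {n : ℕ} (α : Fin n → ℕ) :
    (EuclideanSpace ℝ (Fin n) → ℝ) → EuclideanSpace ℝ (Fin n) → ℝ :=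
  pderivList ((List.finRange n).flatMap fun i => List.replicate (α i) i)

namespace St6
variable {n : ℕ}

noncomputable def pd (i : Fin n) (u : EuclideanSpace ℝ (Fin n) → ℝ) :
    EuclideanSpace ℝ (Fin n) → ℝ :=
  fun x => fderiv ℝ u x (EuclideanSpace.single i 1)

lemma pderivList_cons (i : Fin n) (t : List (Fin n)) (u : EuclideanSpace ℝ (Fin n) → ℝ) :
    pderivList (i :: t) u = pderivList t (pd i u) := rfl

lemma pd_smooth {u : EuclideanSpace ℝ (Fin n) → ℝ} (hu : ContDiff ℝ ∞ u) (i : Fin n) :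
    ContDiff ℝ ∞ (pd i u) := by
  have h1 : ContDiff ℝ ∞ (fderiv ℝ u) := hu.fderiv_right (le_refl _)
  exact (ContinuousLinearMap.apply ℝ ℝ (EuclideanSpace.single i 1)).contDiff.comp h1

lemma pderivList_smooth : ∀ (L : List (Fin n)) (u : EuclideanSpace ℝ (Fin n) → ℝ),
    ContDiff ℝ ∞ u → ContDiff ℝ ∞ (pderivList L u)
  | [], u, hu => hu
  | i :: t, u, hu => pderivList_smooth t _ (pd_smooth hu i)

lemma pd_comm {u : EuclideanSpace ℝ (Fin n) → ℝ} (hu : ContDiff ℝ ∞ u) (i j : Fin n) :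
    pd j (pd i u) = pd i (pd j u) := by
  funext x
  have hsym : IsSymmSndFDerivAt ℝ u x := hu.contDiffAt.isSymmSndFDerivAt (by simp only [minSmoothness_of_isRCLikeNormedField]; decide)
  have hd1 : ContDiff ℝ ∞ (fderiv ℝ u) := hu.fderiv_right (le_refl _)
  have hdiff : DifferentiableAt ℝ (fderiv ℝ u) x :=
    (hd1.differentiable (by decide)) x
  have key : ∀ (v : EuclideanSpace ℝ (Fin n)),
      fderiv ℝ (fun y => fderiv ℝ u y v) x = (ContinuousLinearMap.apply ℝ ℝ v).comp
        (fderiv ℝ (fderiv ℝ u) x) := by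
    intro v
    exact (((ContinuousLinearMap.apply ℝ ℝ v).hasFDerivAt).comp x hdiff.hasFDerivAt).fderiv
  show fderiv ℝ (fun y => fderiv ℝ u y _) x _ = fderiv ℝ (fun y => fderiv ℝ u y _) x _
  rw [key, key]
  exact hsym _ _

lemma pderivList_perm {L1 L2 : List (Fin n)} (hperm : L1.Perm L2) :
    ∀ u : EuclideanSpace ℝ (Fin n) → ℝ, ContDiff ℝ ∞ u → pderivList L1 u = pderivList L2 u := by
  induction hperm with
  | nil => intro u _; rfl
  | cons x _ ih =>
      intro u hu
      rw [pderivList_cons, pderivList_cons, ih _ (pd_smooth hu x)]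
  | swap x y l =>
      intro u hu
      rw [pderivList_cons, pderivList_cons, pderivList_cons, pderivList_cons,
        pd_comm hu y x]
  | trans _ _ ih1 ih2 => intro u hu; rw [ih1 u hu, ih2 u hu]

lemma count_flatMap_replicate (α : Fin n → ℕ) (j : Fin n) :
    ∀ l : List (Fin n), (l.flatMap fun i => List.replicate (α i) i).count j
      = α j * l.count j := by
  intro l
  induction l with
  | nil => simp
  | cons i t ih =>
      rw [List.flatMap_cons, List.count_append, ih, List.count_cons, List.count_replicate]
      by_cases h : j = i
      · subst h; simp [Nat.mul_add, Nat.add_comm]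
      · have h' : ¬ i = j := fun hh => h hh.symm
        simp [h, h']

lemma perm_canonical (L : List (Fin n)) :
    L.Perm ((List.finRange n).flatMap fun i => List.replicate (L.count i) i) := by
  rw [List.perm_iff_count]
  intro a
  rw [count_flatMap_replicate, List.count_eq_one_of_mem (List.nodup_finRange n)
    (List.mem_finRange a), Nat.mul_one]

/-- Smooth with all derivatives (including order 0) globally bounded. -/
def B (b : EuclideanSpace ℝ (Fin n) → ℝ) : Prop :=
  ContDiff ℝ ∞ b ∧ ∀ m : ℕ, ∃ C : ℝ, ∀ x, ‖iteratedFDeriv ℝ m b x‖ ≤ C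

lemma B_clm {F : Type*} [NormedAddCommGroup F] [NormedSpace ℝ F]
    (b : EuclideanSpace ℝ (Fin n) → F) (hb : ContDiff ℝ ∞ b)
    (hbd : ∀ m : ℕ, ∃ C : ℝ, ∀ x, ‖iteratedFDeriv ℝ m b x‖ ≤ C)
    (L : F →L[ℝ] ℝ) : B (fun x => L (b x)) := by
  refine ⟨L.contDiff.comp hb, fun m => ?_⟩
  obtain ⟨C, hC⟩ := hbd m
  refine ⟨‖L‖ * C, fun x => ?_⟩
  have h1 : iteratedFDeriv ℝ m (L ∘ b) x
      = L.compContinuousMultilinearMap (iteratedFDeriv ℝ m b x) :=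
    L.iteratedFDeriv_comp_left hb.contDiffAt (by exact_mod_cast le_top)
  calc ‖iteratedFDeriv ℝ m (fun x => L (b x)) x‖
      = ‖L.compContinuousMultilinearMap (iteratedFDeriv ℝ m b x)‖ := by
        rw [← h1]; rfl
    _ ≤ ‖L‖ * ‖iteratedFDeriv ℝ m b x‖ := L.norm_compContinuousMultilinearMap_le _
    _ ≤ ‖L‖ * C := by
        exact mul_le_mul_of_nonneg_left (hC x) (norm_nonneg L)

lemma B_one : B (fun _ : EuclideanSpace ℝ (Fin n) => (1:ℝ)) := by
  refine ⟨contDiff_const, fun m => ⟨1, fun x => ?_⟩⟩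
  cases m with
  | zero => simp [norm_iteratedFDeriv_zero]
  | succ k =>
      rw [iteratedFDeriv_const_of_ne (Nat.succ_ne_zero k)]
      simp

lemma B_mul {b c : EuclideanSpace ℝ (Fin n) → ℝ} (hb : B b) (hc : B c) :
    B (fun x => b x * c x) := by
  refine ⟨hb.1.mul hc.1, fun m => ?_⟩
  set Cb : ℕ → ℝ := fun k => max ((hb.2 k).choose) 0 with hCb
  set Cc : ℕ → ℝ := fun k => max ((hc.2 k).choose) 0 with hCc
  have hCb' : ∀ k x, ‖iteratedFDeriv ℝ k b x‖ ≤ Cb k :=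
    fun k x => le_max_of_le_left ((hb.2 k).choose_spec x)
  have hCc' : ∀ k x, ‖iteratedFDeriv ℝ k c x‖ ≤ Cc k :=
    fun k x => le_max_of_le_left ((hc.2 k).choose_spec x)
  refine ⟨∑ i ∈ Finset.range (m+1), (m.choose i : ℝ) * Cb i * Cc (m - i), fun x => ?_⟩
  refine le_trans (norm_iteratedFDeriv_mul_le hb.1 hc.1 x (by exact_mod_cast le_top)) ?_
  refine Finset.sum_le_sum fun i _ => ?_
  have h1 : (0:ℝ) ≤ m.choose i := by positivity
  have h2 : (0:ℝ) ≤ Cb i := le_max_right _ _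
  gcongr
  · exact hCb' i x
  · exact hCc' (m - i) x

lemma B_pd {b : EuclideanSpace ℝ (Fin n) → ℝ} (hb : B b) (i : Fin n) : B (pd i b) := by
  have := B_clm (fderiv ℝ b) (hb.1.fderiv_right (le_refl _))
    (fun m => by
      obtain ⟨C, hC⟩ := hb.2 (m+1)
      exact ⟨C, fun x => by rw [norm_iteratedFDeriv_fderiv]; exact hC x⟩)
    (ContinuousLinearMap.apply ℝ ℝ (EuclideanSpace.single i 1))
  exact this

lemma B_d {g : EuclideanSpace ℝ (Fin n) → EuclideanSpace ℝ (Fin n)}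
    (hg : ContDiff ℝ ∞ g)
    (hgb : ∀ k : ℕ, 1 ≤ k → ∃ Ck : ℝ, ∀ x, ‖iteratedFDeriv ℝ k g x‖ ≤ Ck)
    (i k : Fin n) : B (fun x => fderiv ℝ g x (EuclideanSpace.single i 1) k) := by
  have := B_clm (fderiv ℝ g) (hg.fderiv_right (le_refl _))
    (fun m => by
      obtain ⟨C, hC⟩ := hgb (m+1) (Nat.le_add_left 1 m)
      exact ⟨C, fun x => by rw [norm_iteratedFDeriv_fderiv]; exact hC x⟩)
    ((PiLp.proj (𝕜 := ℝ) (p := 2) (β := fun _ : Fin n => ℝ) k).comp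
      (ContinuousLinearMap.apply ℝ (EuclideanSpace ℝ (Fin n)) (EuclideanSpace.single i 1)))
  exact this

lemma memLp_comp_g {p : ℝ} (hp : 1 ≤ p)
    {g ginv : EuclideanSpace ℝ (Fin n) → EuclideanSpace ℝ (Fin n)}
    (hg : ContDiff ℝ ∞ g)
    (hleft : Function.LeftInverse ginv g) (hright : Function.RightInverse ginv g)
    (hdet : ∃ ε : ℝ, 0 < ε ∧ ∀ x, ε ≤ |(fderiv ℝ g x).det|)
    {u : EuclideanSpace ℝ (Fin n) → ℝ}
    (hu : MemLp u (ENNReal.ofReal p)) (hc : Continuous u) :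
    MemLp (fun x => u (g x)) (ENNReal.ofReal p) := by
  obtain ⟨ε, hε, hdet⟩ := hdet
  have hq0 : ENNReal.ofReal p ≠ 0 := by
    simp only [ne_eq, ENNReal.ofReal_eq_zero, not_le]; linarith
  have hqt : ENNReal.ofReal p ≠ ⊤ := ENNReal.ofReal_ne_top
  have hr : (ENNReal.ofReal p).toReal = p := ENNReal.toReal_ofReal (by linarith)
  have hp0 : 0 < p := by linarith
  refine ⟨(hc.comp hg.continuous).aestronglyMeasurable, ?_⟩
  rw [eLpNorm_eq_lintegral_rpow_enorm_toReal hq0 hqt, hr]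
  have hint : ∫⁻ y, (‖u y‖₊ : ℝ≥0∞) ^ p < ⊤ := by
    have h2 := hu.2
    rw [eLpNorm_eq_lintegral_rpow_enorm_toReal hq0 hqt, hr] at h2
    exact (ENNReal.rpow_lt_top_iff_of_pos (by positivity)).mp h2
  have hder : ∀ x ∈ Set.univ, HasFDerivWithinAt g (fderiv ℝ g x) Set.univ x := fun x _ =>
    ((hg.differentiable (by decide)) x).hasFDerivAt.hasFDerivWithinAt
  have himg : g '' Set.univ = Set.univ := by
    rw [Set.image_univ]; exact Set.range_eq_univ.mpr hright.surjective
  have hcov := lintegral_image_eq_lintegral_abs_det_fderiv_mul volume MeasurableSet.univ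
    hder (hleft.injective.injOn) (fun y => (‖u y‖₊ : ℝ≥0∞) ^ p)
  rw [himg, Measure.restrict_univ] at hcov
  have hlow : (ENNReal.ofReal ε) * ∫⁻ x, (‖u (g x)‖₊ : ℝ≥0∞) ^ p
      ≤ ∫⁻ y, (‖u y‖₊ : ℝ≥0∞) ^ p := by
    rw [hcov, ← lintegral_const_mul' _ _ ENNReal.ofReal_ne_top]
    exact lintegral_mono fun x =>
      mul_le_mul_left (ENNReal.ofReal_le_ofReal (hdet x)) _
  have hfin : ∫⁻ x, (‖u (g x)‖₊ : ℝ≥0∞) ^ p < ⊤ := by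
    by_contra h
    rw [not_lt, top_le_iff] at h
    rw [h, ENNReal.mul_top (by simpa [ENNReal.ofReal_eq_zero, not_le] using hε)] at hlow
    exact (lt_irrefl ⊤ (lt_of_le_of_lt hlow hint))
  exact ENNReal.rpow_lt_top_of_nonneg (by positivity) hfin.ne

/-- Functions of the class `U p`: smooth with all iterated partials in `L^p`. -/
def U (p : ℝ) (u : EuclideanSpace ℝ (Fin n) → ℝ) : Prop :=
  ContDiff ℝ ∞ u ∧ ∀ L : List (Fin n), MemLp (pderivList L u) (ENNReal.ofReal p)

lemma U_pd {p : ℝ} {u : EuclideanSpace ℝ (Fin n) → ℝ} (hu : U p u) (k : Fin n) :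
    U p (pd k u) :=
  ⟨pd_smooth hu.1 k, fun L => hu.2 (k :: L)⟩

/-- The inductive invariant: sums of terms `(u ∘ g) * b` with `u ∈ U p`, `b ∈ B`. -/
def Good (p : ℝ) (g : EuclideanSpace ℝ (Fin n) → EuclideanSpace ℝ (Fin n))
    (h : EuclideanSpace ℝ (Fin n) → ℝ) : Prop :=
  ∃ l : List ((EuclideanSpace ℝ (Fin n) → ℝ) × (EuclideanSpace ℝ (Fin n) → ℝ)),
    (∀ q ∈ l, U p q.1 ∧ B q.2) ∧
    ∀ x, h x = (l.map fun q => q.1 (g x) * q.2 x).sum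

variable {p : ℝ} {g ginv : EuclideanSpace ℝ (Fin n) → EuclideanSpace ℝ (Fin n)}

lemma Good.congr {h1 h2 : EuclideanSpace ℝ (Fin n) → ℝ} (hh : Good p g h1)
    (heq : ∀ x, h1 x = h2 x) : Good p g h2 := by
  obtain ⟨l, hl, he⟩ := hh
  exact ⟨l, hl, fun x => (heq x).symm.trans (he x)⟩

lemma Good.zero : Good p g (fun _ => (0:ℝ)) := ⟨[], by simp, by simp⟩

lemma Good.add {h1 h2 : EuclideanSpace ℝ (Fin n) → ℝ} (ha : Good p g h1) (hb : Good p g h2) :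
    Good p g (fun x => h1 x + h2 x) := by
  obtain ⟨l1, hl1, he1⟩ := ha
  obtain ⟨l2, hl2, he2⟩ := hb
  refine ⟨l1 ++ l2, ?_, fun x => ?_⟩
  · intro q hq
    rcases List.mem_append.mp hq with h | h
    · exact hl1 q h
    · exact hl2 q h
  · show h1 x + h2 x = _
    rw [List.map_append, List.sum_append, he1 x, he2 x]

lemma Good.single {u b : EuclideanSpace ℝ (Fin n) → ℝ} (hu : U p u) (hb : B b) :
    Good p g (fun x => u (g x) * b x) := ⟨[(u, b)], by simp [hu, hb], by simp⟩

lemma Good.finsum {ι : Type*} (s : Finset ι) (F : ι → EuclideanSpace ℝ (Fin n) → ℝ)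
    (h : ∀ k ∈ s, Good p g (F k)) : Good p g (fun x => ∑ k ∈ s, F k x) := by
  classical
  induction s using Finset.induction with
  | empty => exact Good.zero.congr (by simp)
  | insert a s' hnot ih =>
      exact ((h a (Finset.mem_insert_self a s')).add
        (ih fun k hk => h k (Finset.mem_insert_of_mem hk))).congr
        (fun x => by rw [Finset.sum_insert hnot])

lemma Good.smooth (hg : ContDiff ℝ ∞ g) {h : EuclideanSpace ℝ (Fin n) → ℝ}
    (hh : Good p g h) : ContDiff ℝ ∞ h := by
  obtain ⟨l, hl, he⟩ := hh
  have key : ∀ (l' : List ((EuclideanSpace ℝ (Fin n) → ℝ) × (EuclideanSpace ℝ (Fin n) → ℝ))),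
      (∀ q ∈ l', U p q.1 ∧ B q.2) →
      ContDiff ℝ ∞ (fun x => (l'.map fun q =>
        q.1 (g x) * q.2 x).sum : EuclideanSpace ℝ (Fin n) → ℝ) := by
    intro l'
    induction l' with
    | nil => intro _; simpa using contDiff_const (c := (0:ℝ))
    | cons q t ih =>
        intro hl'
        simp only [List.map_cons, List.sum_cons]
        exact (((hl' q (by simp)).1.1.comp hg).mul (hl' q (by simp)).2.1).add
          (ih fun r hr => hl' r (List.mem_cons_of_mem q hr))
  have hfe : h = fun x => (l.map fun q => q.1 (g x) * q.2 x).sum := funext he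
  rw [hfe]
  exact key l hl

lemma pd_term (hg : ContDiff ℝ ∞ g) {u b : EuclideanSpace ℝ (Fin n) → ℝ}
    (hu : ContDiff ℝ ∞ u) (hb : ContDiff ℝ ∞ b) (i : Fin n)
    (x : EuclideanSpace ℝ (Fin n)) :
    pd i (fun y => u (g y) * b y) x =
      (∑ k, pd k u (g x) * (fderiv ℝ g x (EuclideanSpace.single i 1) k * b x))
        + u (g x) * pd i b x := by
  have hgd : DifferentiableAt ℝ g x := (hg.differentiable (by decide)) x
  have hud : DifferentiableAt ℝ u (g x) := (hu.differentiable (by decide)) (g x)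
  have hcd : DifferentiableAt ℝ (fun y => u (g y)) x := DifferentiableAt.comp x hud hgd
  have hbd : DifferentiableAt ℝ b x := (hb.differentiable (by decide)) x
  have h1 : pd i (fun y => u (g y) * b y) x
      = u (g x) * pd i b x
        + b x * fderiv ℝ (fun y => u (g y)) x (EuclideanSpace.single i 1) := by
    show fderiv ℝ (fun y => u (g y) * b y) x _ = _
    rw [fderiv_fun_mul hcd hbd]
    simp [pd, smul_eq_mul]
  have h2 : fderiv ℝ (fun y => u (g y)) x = (fderiv ℝ u (g x)).comp (fderiv ℝ g x) :=
    fderiv_comp x hud hgd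
  set v := fderiv ℝ g x (EuclideanSpace.single i 1) with hv
  have h3 : fderiv ℝ u (g x) v = ∑ k, v k * pd k u (g x) := by
    have hbasis : v = ∑ k, v k • EuclideanSpace.single k (1:ℝ) := by
      have := (EuclideanSpace.basisFun (Fin n) ℝ).sum_repr v
      simpa [EuclideanSpace.basisFun_apply, EuclideanSpace.basisFun_repr] using this.symm
    conv_lhs => rw [hbasis]
    rw [map_sum]
    exact Finset.sum_congr rfl fun k _ => by
      rw [ContinuousLinearMap.map_smul, smul_eq_mul]; rfl
  rw [h1, h2]
  simp only [ContinuousLinearMap.comp_apply, ← hv, h3]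
  rw [add_comm]
  congr 1
  rw [Finset.mul_sum]
  exact Finset.sum_congr rfl fun k _ => by ring

lemma pd_add {f1 f2 : EuclideanSpace ℝ (Fin n) → ℝ} (h1 : ContDiff ℝ ∞ f1)
    (h2 : ContDiff ℝ ∞ f2) (i : Fin n) :
    pd i (fun x => f1 x + f2 x) = fun x => pd i f1 x + pd i f2 x := by
  funext x
  show fderiv ℝ (fun x => f1 x + f2 x) x _ = _
  rw [fderiv_fun_add ((h1.differentiable (by decide)) x) ((h2.differentiable (by decide)) x)]
  rfl

lemma Good.pd' (hg : ContDiff ℝ ∞ g)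
    (hgb : ∀ k : ℕ, 1 ≤ k → ∃ Ck : ℝ, ∀ x, ‖iteratedFDeriv ℝ k g x‖ ≤ Ck)
    {h : EuclideanSpace ℝ (Fin n) → ℝ} (hh : Good p g h) (i : Fin n) :
    Good p g (pd i h) := by
  obtain ⟨l, hl, he⟩ := hh
  have hterm : ∀ (u b : EuclideanSpace ℝ (Fin n) → ℝ), U p u → B b →
      Good p g (pd i (fun x => u (g x) * b x)) := by
    intro u b hu hb
    have hGsum : Good p g (fun x => ∑ k, pd k u (g x)
        * (fderiv ℝ g x (EuclideanSpace.single i 1) k * b x)) :=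
      Good.finsum Finset.univ _ fun k _ =>
        Good.single (U_pd hu k) (B_mul (B_d hg hgb i k) hb)
    have hG2 : Good p g (fun x => u (g x) * pd i b x) :=
      Good.single hu (B_pd hb i)
    exact (hGsum.add hG2).congr fun x => (pd_term hg hu.1 hb.1 i x).symm
  have key : ∀ (l' : List ((EuclideanSpace ℝ (Fin n) → ℝ) × (EuclideanSpace ℝ (Fin n) → ℝ))),
      (∀ q ∈ l', U p q.1 ∧ B q.2) →
      Good p g (pd i (fun x => (l'.map fun q => q.1 (g x) * q.2 x).sum)) := by
    intro l'
    induction l' with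
    | nil =>
        intro _
        have h0 : (fun x : EuclideanSpace ℝ (Fin n) =>
            ((List.map (fun q : (EuclideanSpace ℝ (Fin n) → ℝ) × (EuclideanSpace ℝ (Fin n) → ℝ)
              => q.1 (g x) * q.2 x) []).sum)) = fun _ => (0:ℝ) := by simp
        rw [h0]
        refine Good.zero.congr fun x => ?_
        show (0:ℝ) = fderiv ℝ (fun _ => (0:ℝ)) x _
        rw [fderiv_const_apply]
        rfl
    | cons q t ih =>
        intro hl'
        have hq := hl' q (by simp)
        have ht := fun r hr => hl' r (List.mem_cons_of_mem q hr)
        have hsum : (fun x => ((q :: t).map fun r => r.1 (g x) * r.2 x).sum)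
            = fun x => q.1 (g x) * q.2 x + ((t.map fun r => r.1 (g x) * r.2 x)).sum := by
          funext x; simp
        have hf1 : ContDiff ℝ ∞ (fun x => q.1 (g x) * q.2 x) := (hq.1.1.comp hg).mul hq.2.1
        rw [hsum, pd_add hf1 (Good.smooth hg ⟨t, ht, fun _ => rfl⟩) i]
        exact (hterm q.1 q.2 hq.1 hq.2).add (ih ht)
  have hfe : h = fun x => (l.map fun q => q.1 (g x) * q.2 x).sum := funext he
  rw [hfe]
  exact key l hl

lemma Good.memLp (hp : 1 ≤ p) (hg : ContDiff ℝ ∞ g)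
    (hleft : Function.LeftInverse ginv g) (hright : Function.RightInverse ginv g)
    (hdet : ∃ ε : ℝ, 0 < ε ∧ ∀ x, ε ≤ |(fderiv ℝ g x).det|)
    {h : EuclideanSpace ℝ (Fin n) → ℝ} (hh : Good p g h) :
    MemLp h (ENNReal.ofReal p) := by
  obtain ⟨l, hl, he⟩ := hh
  have hfe : h = fun x => (l.map fun q => q.1 (g x) * q.2 x).sum := funext he
  rw [hfe]; clear hfe he
  induction l with
  | nil => simpa using (MemLp.zero' : MemLp (fun _ : EuclideanSpace ℝ (Fin n) => (0:ℝ)) (ENNReal.ofReal p) volume)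
  | cons q t ih =>
      have hq := hl q (by simp)
      have ht := fun r hr => hl r (List.mem_cons_of_mem q hr)
      have hsum : (fun x => ((q :: t).map fun r => r.1 (g x) * r.2 x).sum)
          = fun x => q.1 (g x) * q.2 x + ((t.map fun r => r.1 (g x) * r.2 x)).sum := by
        funext x; simp
      rw [hsum]
      refine MemLp.add ?_ (ih ht)
      obtain ⟨C, hC⟩ := hq.2.2 0
      have hC' : ∀ x, ‖q.2 x‖ ≤ C := fun x => by
        have := hC x; rwa [norm_iteratedFDeriv_zero] at this
      have hcomp : MemLp (fun x => q.1 (g x)) (ENNReal.ofReal p) :=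
        memLp_comp_g hp hg hleft hright hdet (hq.1.2 []) hq.1.1.continuous
      refine MemLp.of_le_mul (c := C) hcomp
        (((hq.1.1.continuous.comp hg.continuous).mul
          hq.2.1.continuous).aestronglyMeasurable) ?_
      refine Filter.Eventually.of_forall fun x => ?_
      calc ‖q.1 (g x) * q.2 x‖ = ‖q.2 x‖ * ‖q.1 (g x)‖ := by
            rw [norm_mul, mul_comm]
        _ ≤ C * ‖q.1 (g x)‖ := mul_le_mul_of_nonneg_right (hC' x) (norm_nonneg _)

end St6

/-- If `g` is a smooth diffeomorphism of `ℝⁿ` with `inf |det Dg| > 0` and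
all derivatives of order `≥ 1` globally bounded, and `f : ℝⁿ → ℝⁿ` is smooth with all
partial derivatives of all components in `L^p`, then the same holds for `f ∘ g`. -/
theorem statement_6 (n : ℕ) (hn : 1 ≤ n) (p : ℝ) (hp : 1 ≤ p)
    (g ginv : EuclideanSpace ℝ (Fin n) → EuclideanSpace ℝ (Fin n))
    (hg : ContDiff ℝ (⊤ : ℕ∞) g) (hginv : ContDiff ℝ (⊤ : ℕ∞) ginv)
    (hleft : Function.LeftInverse ginv g) (hright : Function.RightInverse ginv g)
    (hdet : ∃ ε : ℝ, 0 < ε ∧ ∀ x, ε ≤ |(fderiv ℝ g x).det|)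
    (hgb : ∀ k : ℕ, 1 ≤ k → ∃ Ck : ℝ, ∀ x, ‖iteratedFDeriv ℝ k g x‖ ≤ Ck)
    (f : EuclideanSpace ℝ (Fin n) → EuclideanSpace ℝ (Fin n))
    (hf : ContDiff ℝ (⊤ : ℕ∞) f)
    (hfLp : ∀ (α : Fin n → ℕ) (i : Fin n),
      MeasureTheory.MemLp (pderivMulti α fun x => f x i) (ENNReal.ofReal p)) :
    ∀ (α : Fin n → ℕ) (i : Fin n),
      MeasureTheory.MemLp (pderivMulti α fun x => f (g x) i) (ENNReal.ofReal p) := by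
  intro α i
  have hg' : ContDiff ℝ ∞ g := hg.of_le (by simp)
  have hf' : ContDiff ℝ ∞ f := hf.of_le (by simp)
  have hfi : ContDiff ℝ ∞ (fun y => f y i) :=
    (PiLp.proj (𝕜 := ℝ) (p := 2) (β := fun _ : Fin n => ℝ) i).contDiff.comp hf'
  have hU : St6.U p (fun y => f y i) := by
    refine ⟨hfi, fun L => ?_⟩
    rw [St6.pderivList_perm (St6.perm_canonical L) (fun y => f y i) hfi]
    exact hfLp (fun j => L.count j) i
  have hGood : St6.Good p g (fun x => f (g x) i) :=
    (St6.Good.single hU St6.B_one).congr fun x => by simp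
  have main : ∀ (L : List (Fin n)) (h : EuclideanSpace ℝ (Fin n) → ℝ),
      St6.Good p g h → MemLp (pderivList L h) (ENNReal.ofReal p) := by
    intro L
    induction L with
    | nil => intro h hh; exact St6.Good.memLp hp hg' hleft hright hdet hh
    | cons j t ih =>
        intro h hh
        rw [St6.pderivList_cons]
        exact ih _ (St6.Good.pd' hg' hgb hh j)
  exact main _ _ hGood
end
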